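/- arXiv:1901.08288 — 6 statements merged into one kernel-verified Lean document; each statement's English description precedes it below -/
import Mathlib

section
/- Suppose U = (U_1,…,U_N) with U_i ∈ L²(ℝ^d, M_i) is a local equilibrium, i.e. for every i = 1,…,N one has Σ_{j=1}^N k_{ij} η_j ∫ U_j dM_j = (Σ_{j=1}^N k_{ji}) η_i U_i(v) for M_i-almost every v ∈ ℝ^d. Then there is a constant c ∈ ℝ such that for every i, U_i = c holds M_i-almost everywhere. -/
/-!
Since `M i` is a probability measure, the local equilibrium equation says that `U i` is a.e.
equal to its mean `a i`, and that these means satisfy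
`Σ_j k_{ij} η_j a_j = (Σ_j k_{ji}) η_i a_i`. By the balance law for `η` this says that `a` is
harmonic for the weights `k_{ij} η_j`, and a harmonic function on a strongly connected weighted
graph is constant by the maximum principle.
-/

open Finset MeasureTheory

section Harmonic

variable {ι : Type*} [Fintype ι] {w : ι → ι → ℝ} {a : ι → ℝ}

def IsHarmonic (w : ι → ι → ℝ) (a : ι → ℝ) : Prop :=
  ∀ i, ∑ j, w i j * a j = (∑ j, w i j) * a i

theorem sum_pos_of_reflTransGen_of_ne (hw : ∀ i j, 0 ≤ w i j) {i j : ι}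
    (h : Relation.ReflTransGen (fun x y => 0 < w y x) i j) (hij : i ≠ j) :
    0 < ∑ m, w m i := by
  obtain hij' | ⟨y, hy, -⟩ := h.cases_head
  · exact absurd hij' hij
  · exact hy.trans_le (single_le_sum (fun m _ => hw m i) (mem_univ y))

namespace IsHarmonic

theorem eq_of_pos_of_forall_le (ha : IsHarmonic w a) (hw : ∀ i j, 0 ≤ w i j) {i j : ι}
    (hmax : ∀ m, a m ≤ a i) (hij : 0 < w i j) : a j = a i := by
  have hterm : ∀ m ∈ univ, 0 ≤ w i m * (a i - a m) := fun m _ =>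
    mul_nonneg (hw i m) (sub_nonneg.mpr (hmax m))
  have hsum : ∑ m, w i m * (a i - a m) = 0 := by
    simp only [mul_sub, sum_sub_distrib, ← sum_mul, ha i]
    ring
  have hj := (sum_eq_zero_iff_of_nonneg hterm).mp hsum j (mem_univ j)
  linarith [(mul_eq_zero.mp hj).resolve_left hij.ne']

theorem eq_of_reflTransGen_of_forall_le (ha : IsHarmonic w a) (hw : ∀ i j, 0 ≤ w i j)
    {i j : ι} (hmax : ∀ m, a m ≤ a i) (h : Relation.ReflTransGen (fun x y => 0 < w y x) j i) :
    a j = a i := by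
  induction h using Relation.ReflTransGen.head_induction_on with
  | refl => rfl
  | head hxy _ ih => exact (ha.eq_of_pos_of_forall_le hw (ih ▸ hmax) hxy).trans ih

theorem exists_eq_const [Nonempty ι] (ha : IsHarmonic w a) (hw : ∀ i j, 0 ≤ w i j)
    (hconn : ∀ i j, Relation.ReflTransGen (fun x y => 0 < w y x) j i) :
    ∃ c, ∀ i, a i = c := by
  obtain ⟨i, hmax⟩ := Finite.exists_max a
  exact ⟨a i, fun j => ha.eq_of_reflTransGen_of_forall_le hw hmax (hconn i j)⟩

end IsHarmonic

end Harmonic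

theorem statement1_general
    (N : ℕ) (hN : 2 ≤ N) (d : ℕ)
    (k : Fin N → Fin N → ℝ) (hk : ∀ i j, 0 ≤ k i j)
    -- Assumption A1
    (hA1 : ∀ i j : Fin N, Relation.ReflTransGen (fun a b => 0 < k b a) j i)
    (η : Fin N → ℝ) (hηpos : ∀ i, 0 < η i)
    (hηbal : ∀ i, ∑ j, (k i j * η j - k j i * η i) = 0)
    (M : Fin N → Measure (Fin d → ℝ))
    (hM : ∀ i, IsProbabilityMeasure (M i))
    (U : Fin N → (Fin d → ℝ) → ℝ)
    (heq : ∀ i, ∀ᵐ v ∂(M i),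
      ∑ j, k i j * η j * (∫ w, U j w ∂(M j)) = (∑ j, k j i) * η i * U i v) :
    ∃ c : ℝ, ∀ i, ∀ᵐ v ∂(M i), U i v = c := by
  set a : Fin N → ℝ := fun i => ∫ v, U i v ∂(M i)
  set w : Fin N → Fin N → ℝ := fun i j => k i j * η j
  have hw : ∀ i j, 0 ≤ w i j := fun i j => mul_nonneg (hk i j) (hηpos j).le
  have hconn : ∀ i j, Relation.ReflTransGen (fun x y => 0 < w y x) j i := fun i j =>
    (hA1 i j).lift id fun x _ hxy => mul_pos hxy (hηpos x)
  have hbal : ∀ i, ∑ j, w i j = (∑ j, k j i) * η i := fun i => by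
    rw [sum_mul, ← sub_eq_zero, ← sum_sub_distrib]
    exact hηbal i
  have hout : ∀ i, (∑ j, w i j) ≠ 0 := fun i => by
    have := Fin.nontrivial_iff_two_le.mpr hN
    obtain ⟨j, hij⟩ := exists_ne i
    rw [hbal]
    exact (mul_pos (sum_pos_of_reflTransGen_of_ne hk (hA1 j i) hij.symm) (hηpos i)).ne'
  have hU : ∀ i, ∀ᵐ v ∂(M i), U i v = (∑ j, w i j * a j) / ∑ j, w i j := fun i => by
    filter_upwards [heq i] with v hv
    rw [eq_div_iff (hout i), hbal, mul_comm]
    exact hv.symm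
  have ha : ∀ i, a i = (∑ j, w i j * a j) / ∑ j, w i j := fun i =>
    have := hM i
    integral_eq_const (hU i)
  have harm : IsHarmonic w a := fun i => by
    rw [ha i, mul_div_cancel₀ _ (hout i)]
  have : NeZero N := ⟨by omega⟩
  obtain ⟨c, hc⟩ := harm.exists_eq_const hw hconn
  refine ⟨c, fun i => ?_⟩
  filter_upwards [hU i] with v hv
  rw [hv, ← ha i, hc i]

/-- A local equilibrium of the reaction operator is constant: if
`Σ_j k_{ij} η_j ∫ U_j dM_j = (Σ_j k_{ji}) η_i U_i(v)` for `M_i`-a.e. `v` and every `i`,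
then all the `U_i` are a.e. equal to one common constant. -/
theorem statement1
    (N : ℕ) (hN : 2 ≤ N) (d : ℕ) (hd : 1 ≤ d)
    (k : Fin N → Fin N → ℝ) (hk : ∀ i j, 0 ≤ k i j)
    -- Assumption A1
    (hA1 : ∀ i j : Fin N, Relation.ReflTransGen (fun a b => 0 < k b a) j i)
    (η : Fin N → ℝ) (hηpos : ∀ i, 0 < η i) (hηsum : ∑ i, η i = 1)
    (hηbal : ∀ i, ∑ j, (k i j * η j - k j i * η i) = 0)
    (M : Fin N → Measure (Fin d → ℝ))
    (hM : ∀ i, IsProbabilityMeasure (M i))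
    (U : Fin N → (Fin d → ℝ) → ℝ)
    (hU : ∀ i, MemLp (U i) 2 (M i))
    (heq : ∀ i, ∀ᵐ v ∂(M i),
      ∑ j, k i j * η j * (∫ w, U j w ∂(M j)) = (∑ j, k j i) * η i * U i v) :
    ∃ c : ℝ, ∀ i, ∀ᵐ v ∂(M i), U i v = c :=
  statement1_general N hN d k hk hA1 η hηpos hηbal M hM U heq
end

section
/- For all U = (U_1,…,U_N) and V = (V_1,…,V_N) with U_i, V_i ∈ L²(ℝ^d, M_i), the reaction bilinear form satisfies the identity ⟨LU,V⟩ = −(1/2) Σ_{i,j=1}^N k_{ij} η_j ∫∫ [ U_i(v) V_i(v) + U_j(v') V_j(v') − 2 U_j(v') V_i(v) ] dM_j(v') dM_i(v). -/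
/-!
Since the `M_i` are probability measures, both sides are combinations of `∫ U_i V_i dM_i`,
`∫ U_j dM_j` and `∫ V_i dM_i`. The cross terms agree, and the diagonal terms match because the
balance condition `Σ_j k_ij η_j = Σ_j k_ji η_i` turns the gain weight of `∫ U_i V_i dM_i` into its
loss weight.
-/

open Finset MeasureTheory

section BalanceSum

variable {ι : Type*} [Fintype ι]

theorem sum_sum_mul_add_eq_two_mul_of_balance (k : ι → ι → ℝ) (η a : ι → ℝ)
    (hbal : ∀ i, ∑ j, (k i j * η j - k j i * η i) = 0) :
    ∑ i, ∑ j, k i j * η j * (a i + a j) = 2 * ∑ i, ∑ j, k j i * η i * a i := by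
  have hgain_loss : ∀ i, ∑ j, k i j * η j = ∑ j, k j i * η i := fun i => by
    have := hbal i
    rw [sum_sub_distrib] at this
    linarith
  have hsource : ∑ i, ∑ j, k i j * η j * a i = ∑ i, ∑ j, k j i * η i * a i :=
    sum_congr rfl fun i _ => by rw [← sum_mul, ← sum_mul, hgain_loss i]
  have htarget : ∑ i, ∑ j, k i j * η j * a j = ∑ i, ∑ j, k j i * η i * a i := sum_comm
  simp only [mul_add, sum_add_distrib, hsource, htarget]
  ring

theorem sum_sum_sub_eq_neg_half_mul_of_balance (k : ι → ι → ℝ) (η a : ι → ℝ) (c : ι → ι → ℝ)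
    (hbal : ∀ i, ∑ j, (k i j * η j - k j i * η i) = 0) :
    ∑ i, ∑ j, k i j * η j * c i j - ∑ i, ∑ j, k j i * η i * a i
      = -(1/2) * ∑ i, ∑ j, k i j * η j * (a i + a j - 2 * c i j) := by
  have hsplit : ∑ i, ∑ j, k i j * η j * (a i + a j - 2 * c i j)
      = ∑ i, ∑ j, k i j * η j * (a i + a j) - 2 * ∑ i, ∑ j, k i j * η j * c i j := by
    simp only [mul_sub, sum_sub_distrib, mul_sum]
    congr 2 with i
    congr 1 with j
    ring
  rw [hsplit, sum_sum_mul_add_eq_two_mul_of_balance k η a hbal]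
  ring

end BalanceSum

section IteratedIntegral

variable {α β : Type*} [MeasurableSpace α] [MeasurableSpace β] {μ : Measure α} {ν : Measure β}

theorem integral_integral_mul (f : β → ℝ) (g : α → ℝ) :
    ∫ v, ∫ w, f w * g v ∂ν ∂μ = (∫ w, f w ∂ν) * ∫ v, g v ∂μ := by
  simp only [integral_mul_const, integral_const_mul]

theorem integral_integral_mul_add_mul_sub [IsProbabilityMeasure μ] [IsProbabilityMeasure ν]
    {f g : α → ℝ} {p q : β → ℝ} (hfg : Integrable (fun v => f v * g v) μ) (hg : Integrable g μ)
    (hpq : Integrable (fun w => p w * q w) ν) (hp : Integrable p ν) :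
    ∫ v, ∫ w, (f v * g v + p w * q w - 2 * p w * g v) ∂ν ∂μ
      = ∫ v, f v * g v ∂μ + ∫ w, p w * q w ∂ν - 2 * ((∫ w, p w ∂ν) * ∫ v, g v ∂μ) := by
  have hinner : ∀ v, ∫ w, (f v * g v + p w * q w - 2 * p w * g v) ∂ν
      = f v * g v + ∫ w, p w * q w ∂ν - 2 * (∫ w, p w ∂ν) * g v := fun v => by
    have hsum : Integrable (fun w => f v * g v + p w * q w) ν := (integrable_const _).add hpq
    have hp' : Integrable (fun w => 2 * p w * g v) ν := (hp.const_mul 2).mul_const (g v)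
    rw [integral_sub hsum hp', integral_add (integrable_const _) hpq,
      integral_const, probReal_univ, one_smul, integral_mul_const, integral_const_mul]
  have hsum : Integrable (fun v => f v * g v + ∫ w, p w * q w ∂ν) μ :=
    hfg.add (integrable_const _)
  have hg' : Integrable (fun v => 2 * (∫ w, p w ∂ν) * g v) μ := hg.const_mul _
  simp only [hinner]
  rw [integral_sub hsum hg', integral_add hfg (integrable_const _),
    integral_const, probReal_univ, one_smul, integral_const_mul]
  ring

end IteratedIntegral

theorem statement3_general
    (N d : ℕ)
    (k : Fin N → Fin N → ℝ)
    (η : Fin N → ℝ)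
    (hηbal : ∀ i, ∑ j, (k i j * η j - k j i * η i) = 0)
    (M : Fin N → Measure (Fin d → ℝ))
    (hM : ∀ i, IsProbabilityMeasure (M i))
    (U V : Fin N → (Fin d → ℝ) → ℝ)
    (hU : ∀ i, MemLp (U i) 2 (M i)) (hV : ∀ i, MemLp (V i) 2 (M i)) :
    (∑ i, ∑ j, k i j * η j * ∫ v, ∫ w, U j w * V i v ∂(M j) ∂(M i))
      - ∑ i, ∑ j, k j i * η i * ∫ v, U i v * V i v ∂(M i)
    = -(1/2) * ∑ i, ∑ j, k i j * η j *
        ∫ v, ∫ w, (U i v * V i v + U j w * V j w - 2 * U j w * V i v) ∂(M j) ∂(M i) := by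
  have hUV : ∀ i, Integrable (fun v => U i v * V i v) (M i) := fun i => (hU i).integrable_mul (hV i)
  have hexpand : ∀ i j, ∫ v, ∫ w, (U i v * V i v + U j w * V j w - 2 * U j w * V i v) ∂(M j) ∂(M i)
      = ∫ v, U i v * V i v ∂(M i) + ∫ w, U j w * V j w ∂(M j)
        - 2 * ((∫ w, U j w ∂(M j)) * ∫ v, V i v ∂(M i)) := fun i j =>
    integral_integral_mul_add_mul_sub (hUV i) ((hV i).integrable one_le_two) (hUV j)
      ((hU j).integrable one_le_two)
  simp only [hexpand, integral_integral_mul]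
  exact sum_sum_sub_eq_neg_half_mul_of_balance k η _ _ hηbal

/-- The reaction bilinear form identity:
`⟨LU,V⟩ = −(1/2) Σ_{i,j} k_{ij} η_j ∫∫ [U_i(v)V_i(v) + U_j(v')V_j(v') − 2U_j(v')V_i(v)] dM_j(v') dM_i(v)`. -/
theorem statement3
    (N d : ℕ) (hN : 2 ≤ N) (hd : 1 ≤ d)
    (k : Fin N → Fin N → ℝ) (hk : ∀ i j, 0 ≤ k i j)
    (η : Fin N → ℝ) (hηpos : ∀ i, 0 < η i) (hηsum : ∑ i, η i = 1)
    (hηbal : ∀ i, ∑ j, (k i j * η j - k j i * η i) = 0)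
    (M : Fin N → Measure (Fin d → ℝ))
    (hM : ∀ i, IsProbabilityMeasure (M i))
    (U V : Fin N → (Fin d → ℝ) → ℝ)
    (hU : ∀ i, MemLp (U i) 2 (M i)) (hV : ∀ i, MemLp (V i) 2 (M i)) :
    (∑ i, ∑ j, k i j * η j * ∫ v, ∫ w, U j w * V i v ∂(M j) ∂(M i))
      - ∑ i, ∑ j, k j i * η i * ∫ v, U i v * V i v ∂(M i)
    = -(1/2) * ∑ i, ∑ j, k i j * η j *
        ∫ v, ∫ w, (U i v * V i v + U j w * V j w - 2 * U j w * V i v) ∂(M j) ∂(M i) :=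
  statement3_general N d k η hηbal M hM U V hU hV
end

section
/- For every U = (U_1,…,U_N) with U_i ∈ L²(ℝ^d, M_i), the reaction quadratic form satisfies ⟨LU,U⟩ = −(1/2) Σ_{i,j=1}^N k_{ij} η_j ∫∫ (U_i(v) − U_j(v'))² dM_j(v') dM_i(v); in particular ⟨LU,U⟩ ≤ 0. -/
/-!
Since the `M i` are probability measures, the gain term factorises as `(∫ U_j)(∫ U_i)` and
`∫∫ (U_i v - U_j w)² = ∫ U_i² + ∫ U_j² - 2 (∫ U_i)(∫ U_j)`. What remains is an identity of
finite sums: the balance condition `∑_j k_ij η_j = ∑_j k_ji η_i` lets the loss term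
`∑_ij k_ji η_i ∫ U_i²` be rewritten as either half of the symmetrised square terms.
-/

open Finset MeasureTheory

section Integrals

variable {α β : Type*} [MeasurableSpace α] [MeasurableSpace β]
  {μ : Measure α} {ν : Measure β} [IsProbabilityMeasure μ] [IsProbabilityMeasure ν]
  {f : α → ℝ} {g : β → ℝ}

lemma integral_const_sub_sq (hg : MemLp g 2 ν) (a : ℝ) :
    ∫ w, (a - g w) ^ 2 ∂ν = a ^ 2 - 2 * a * ∫ w, g w ∂ν + ∫ w, g w ^ 2 ∂ν := by
  have hg₁ : Integrable (fun w => 2 * a * g w) ν := (hg.integrable one_le_two).const_mul _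
  have hg₂ : Integrable (fun w => a ^ 2 - 2 * a * g w) ν := (integrable_const _).sub hg₁
  calc ∫ w, (a - g w) ^ 2 ∂ν = ∫ w, (a ^ 2 - 2 * a * g w + g w ^ 2) ∂ν := by
        congr with w; ring
    _ = _ := by
        rw [integral_add hg₂ hg.integrable_sq,
          integral_sub (integrable_const _) hg₁, integral_const_mul, integral_const]
        simp

lemma integral_integral_sub_sq (hf : MemLp f 2 μ) (hg : MemLp g 2 ν) :
    ∫ v, ∫ w, (f v - g w) ^ 2 ∂ν ∂μ
      = ∫ v, f v ^ 2 ∂μ + ∫ w, g w ^ 2 ∂ν - 2 * (∫ v, f v ∂μ) * ∫ w, g w ∂ν := by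
  simp_rw [integral_const_sub_sq hg]
  set G := ∫ w, g w ∂ν
  have hf₁ : Integrable (fun v => 2 * G * f v) μ := (hf.integrable one_le_two).const_mul _
  have hf₂ : Integrable (fun v => f v ^ 2 - 2 * G * f v) μ := hf.integrable_sq.sub hf₁
  calc ∫ v, (f v ^ 2 - 2 * f v * G + ∫ w, g w ^ 2 ∂ν) ∂μ
        = ∫ v, (f v ^ 2 - 2 * G * f v + ∫ w, g w ^ 2 ∂ν) ∂μ := by
        congr with v; ring
    _ = _ := by
        rw [integral_add hf₂ (integrable_const _),
          integral_sub hf.integrable_sq hf₁, integral_const_mul, integral_const]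
        simp only [probReal_univ, one_smul]
        ring

end Integrals

lemma sum_mul_sub_sum_eq_neg_half_sum {ι : Type*} [Fintype ι] (a : ι → ι → ℝ)
    (hbal : ∀ i, ∑ j, a i j = ∑ j, a j i) (A B : ι → ℝ) :
    ∑ i, ∑ j, a i j * (B j * B i) - ∑ i, ∑ j, a j i * A i
      = -(1/2) * ∑ i, ∑ j, a i j * (A i + A j - 2 * B i * B j) := by
  have hA : ∑ i, ∑ j, a i j * A i = ∑ i, ∑ j, a j i * A i := by
    simp_rw [← sum_mul, hbal]
  have hA' : ∑ i, ∑ j, a i j * A j = ∑ i, ∑ j, a j i * A i := sum_comm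
  have hB : ∑ i, ∑ j, a i j * (2 * B i * B j) = 2 * ∑ i, ∑ j, a i j * (B j * B i) := by
    simp_rw [mul_sum]
    exact sum_congr rfl fun i _ => sum_congr rfl fun j _ => by ring
  simp only [mul_add, mul_sub, sum_add_distrib, sum_sub_distrib, hA, hA', hB]
  ring

theorem statement4_general
    (N d : ℕ)
    (k : Fin N → Fin N → ℝ) (hk : ∀ i j, 0 ≤ k i j)
    (η : Fin N → ℝ) (hηpos : ∀ i, 0 < η i)
    (hηbal : ∀ i, ∑ j, (k i j * η j - k j i * η i) = 0)
    (M : Fin N → Measure (Fin d → ℝ))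
    (hM : ∀ i, IsProbabilityMeasure (M i))
    (U : Fin N → (Fin d → ℝ) → ℝ)
    (hU : ∀ i, MemLp (U i) 2 (M i)) :
    ((∑ i, ∑ j, k i j * η j * ∫ v, ∫ w, U j w * U i v ∂(M j) ∂(M i))
        - ∑ i, ∑ j, k j i * η i * ∫ v, (U i v) ^ 2 ∂(M i)
      = -(1/2) * ∑ i, ∑ j, k i j * η j *
          ∫ v, ∫ w, (U i v - U j w) ^ 2 ∂(M j) ∂(M i)) ∧
    ((∑ i, ∑ j, k i j * η j * ∫ v, ∫ w, U j w * U i v ∂(M j) ∂(M i))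
        - ∑ i, ∑ j, k j i * η i * ∫ v, (U i v) ^ 2 ∂(M i) ≤ 0) := by
  have hbal : ∀ i, ∑ j, k i j * η j = ∑ j, k j i * η i := fun i => by
    simpa only [sum_sub_distrib, sub_eq_zero] using hηbal i
  have hmul : ∀ i j, ∫ v, ∫ w, U j w * U i v ∂(M j) ∂(M i)
      = (∫ w, U j w ∂(M j)) * ∫ v, U i v ∂(M i) := fun i j => by
    simp_rw [integral_mul_const]
    exact integral_const_mul _ _
  have hsq : ∀ i j, ∫ v, ∫ w, (U i v - U j w) ^ 2 ∂(M j) ∂(M i)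
      = ∫ v, U i v ^ 2 ∂(M i) + ∫ w, U j w ^ 2 ∂(M j)
        - 2 * (∫ v, U i v ∂(M i)) * ∫ w, U j w ∂(M j) :=
    fun i j => integral_integral_sub_sq (hU i) (hU j)
  have hid : (∑ i, ∑ j, k i j * η j * ∫ v, ∫ w, U j w * U i v ∂(M j) ∂(M i))
        - ∑ i, ∑ j, k j i * η i * ∫ v, (U i v) ^ 2 ∂(M i)
      = -(1/2) * ∑ i, ∑ j, k i j * η j *
          ∫ v, ∫ w, (U i v - U j w) ^ 2 ∂(M j) ∂(M i) := by
    simp only [hmul, hsq]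
    exact sum_mul_sub_sum_eq_neg_half_sum (fun i j => k i j * η j) hbal _ _
  have hS : 0 ≤ ∑ i, ∑ j, k i j * η j * ∫ v, ∫ w, (U i v - U j w) ^ 2 ∂(M j) ∂(M i) :=
    sum_nonneg fun i _ => sum_nonneg fun j _ => mul_nonneg (mul_nonneg (hk i j) (hηpos j).le)
      (integral_nonneg fun v => integral_nonneg fun w => sq_nonneg _)
  exact ⟨hid, hid ▸ by linarith⟩

/-- The reaction quadratic form identity and negative semi-definiteness:
`⟨LU,U⟩ = −(1/2) Σ_{i,j} k_{ij} η_j ∫∫ (U_i(v) − U_j(v'))² dM_j(v') dM_i(v) ≤ 0`. -/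
theorem statement4
    (N d : ℕ) (hN : 2 ≤ N) (hd : 1 ≤ d)
    (k : Fin N → Fin N → ℝ) (hk : ∀ i j, 0 ≤ k i j)
    (η : Fin N → ℝ) (hηpos : ∀ i, 0 < η i) (hηsum : ∑ i, η i = 1)
    (hηbal : ∀ i, ∑ j, (k i j * η j - k j i * η i) = 0)
    (M : Fin N → Measure (Fin d → ℝ))
    (hM : ∀ i, IsProbabilityMeasure (M i))
    (U : Fin N → (Fin d → ℝ) → ℝ)
    (hU : ∀ i, MemLp (U i) 2 (M i)) :
    ((∑ i, ∑ j, k i j * η j * ∫ v, ∫ w, U j w * U i v ∂(M j) ∂(M i))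
        - ∑ i, ∑ j, k j i * η i * ∫ v, (U i v) ^ 2 ∂(M i)
      = -(1/2) * ∑ i, ∑ j, k i j * η j *
          ∫ v, ∫ w, (U i v - U j w) ^ 2 ∂(M j) ∂(M i)) ∧
    ((∑ i, ∑ j, k i j * η j * ∫ v, ∫ w, U j w * U i v ∂(M j) ∂(M i))
        - ∑ i, ∑ j, k j i * η i * ∫ v, (U i v) ^ 2 ∂(M i) ≤ 0) :=
  statement4_general N d k hk η hηpos hηbal M hM U hU
end

section
/- Suppose that for each ordered pair (i,j) with i ≠ j a path j = i_0, i_1, …, i_{P_{ij}} = i is given such that k_{i_p i_{p−1}} > 0 for p = 1,…,P_{ij} and no ordered edge (i_{p−1}, i_p) is repeated within the path. Set μ_{ij} := min_{1 ≤ p ≤ P_{ij}} k_{i_p i_{p−1}} η_{i_{p−1}} and define γ_2 > 0 by 1/γ_2 := Σ_{i ≠ j} η_i η_j P_{ij}/μ_{ij}. Then for every vector (ρ_1,…,ρ_N) ∈ ℝ^N with ρ := Σ_{i=1}^N ρ_i, one has Σ_{i=1}^N (ρ_i − ρ η_i)²/η_i ≤ (1/γ_2) Σ_{i,j=1}^N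 (k_{ij} η_j / 2) (ρ_i/η_i − ρ_j/η_j)². -/
open Finset

/-- Path estimate on the macroscopic reaction dissipation: with paths from `j` to `i` along
positive rate constants, `μ_{ij}` the minimal `k_{i_p i_{p−1}} η_{i_{p−1}}` along the path and
`1/γ₂ = Σ_{i≠j} η_i η_j P_{ij}/μ_{ij}`, one has
`Σ_i (ρ_i − ρη_i)²/η_i ≤ (1/γ₂) Σ_{i,j} (k_{ij}η_j/2)(ρ_i/η_i − ρ_j/η_j)²`. -/
theorem statement8
    (N : ℕ) (hN : 2 ≤ N)
    (k : Fin N → Fin N → ℝ) (hk : ∀ i j, 0 ≤ k i j)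
    (η : Fin N → ℝ) (hηpos : ∀ i, 0 < η i) (hηsum : ∑ i, η i = 1)
    (hηbal : ∀ i, ∑ j, (k i j * η j - k j i * η i) = 0)
    -- the path data: for each ordered pair (i,j) with i ≠ j, a path
    -- j = c i j 0, c i j 1, …, c i j (P i j) = i
    (P : Fin N → Fin N → ℕ) (c : Fin N → Fin N → ℕ → Fin N)
    (hP : ∀ i j, i ≠ j → 1 ≤ P i j)
    (hc0 : ∀ i j, i ≠ j → c i j 0 = j)
    (hcP : ∀ i j, i ≠ j → c i j (P i j) = i)
    (hcpos : ∀ i j, i ≠ j → ∀ p, 1 ≤ p → p ≤ P i j → 0 < k (c i j p) (c i j (p - 1)))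
    -- no ordered edge is repeated within a path
    (hnorep : ∀ i j, i ≠ j → ∀ p q, 1 ≤ p → p ≤ P i j → 1 ≤ q → q ≤ P i j → p ≠ q →
      (c i j (p - 1), c i j p) ≠ (c i j (q - 1), c i j q))
    -- μ i j is the minimum of k_{i_p i_{p−1}} η_{i_{p−1}} over the path
    (μ : Fin N → Fin N → ℝ)
    (hμ : ∀ i j, i ≠ j → IsLeast
      {x : ℝ | ∃ p, 1 ≤ p ∧ p ≤ P i j ∧ x = k (c i j p) (c i j (p - 1)) * η (c i j (p - 1))}
      (μ i j))
    (γ₂ : ℝ) (hγ₂pos : 0 < γ₂)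
    (hγ₂ : 1 / γ₂ = ∑ i, ∑ j, if i ≠ j then η i * η j * (P i j : ℝ) / μ i j else 0)
    (ρv : Fin N → ℝ) :
    let ρ : ℝ := ∑ i, ρv i;
    ∑ i, (ρv i - ρ * η i) ^ 2 / η i
      ≤ (1 / γ₂) * ∑ i, ∑ j, (k i j * η j / 2) * (ρv i / η i - ρv j / η j) ^ 2 := by
  intro ρ
  set u : Fin N → ℝ := fun i => ρv i / η i with hu
  have hηne : ∀ i, η i ≠ 0 := fun i => (hηpos i).ne'
  have hρv : ∀ i, ρv i = η i * u i := by
    intro i; simp only [hu]; rw [mul_comm]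
    exact (div_mul_cancel₀ (ρv i) (hηne i)).symm
  set S : ℝ := ∑ a, ∑ b, k a b * η b * (u a - u b) ^ 2 with hS
  have hSnonneg : 0 ≤ S := by
    apply Finset.sum_nonneg; intro a _
    apply Finset.sum_nonneg; intro b _
    have h1 := hk a b; have h2 := (hηpos b).le
    positivity
  have hμpos : ∀ i j, i ≠ j → 0 < μ i j := by
    intro i j hij
    obtain ⟨⟨p, hp1, hp2, hpe⟩, _⟩ := hμ i j hij
    rw [hpe]
    exact mul_pos (hcpos i j hij p hp1 hp2) (hηpos _)
  have hρ : ρ = ∑ i, η i * u i := by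
    simp only [ρ]; exact Finset.sum_congr rfl fun i _ => hρv i
  have hL : ∀ i, (ρv i - ρ * η i) ^ 2 / η i = η i * (u i - ρ) ^ 2 := by
    intro i
    rw [hρv i, div_eq_iff (hηne i)]
    ring
  have hA : ∑ i, η i * (u i - ρ) ^ 2 = (∑ i, η i * u i ^ 2) - ρ ^ 2 := by
    have h1 : ∀ i : Fin N, η i * (u i - ρ) ^ 2
        = η i * u i ^ 2 - η i * u i * (2 * ρ) + η i * ρ ^ 2 := fun i => by ring
    rw [Finset.sum_congr rfl fun i _ => h1 i, Finset.sum_add_distrib, Finset.sum_sub_distrib,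
      ← Finset.sum_mul, ← Finset.sum_mul, ← hρ, hηsum]
    ring
  have hB1 : ∀ i, ∑ j, η i * η j * (u i - u j) ^ 2
      = η i * u i ^ 2 - (η i * u i) * (2 * ρ) + η i * (∑ j, η j * u j ^ 2) := by
    intro i
    have h1 : ∀ j : Fin N, η i * η j * (u i - u j) ^ 2
        = η i * (η j * u j ^ 2) - η j * u j * (2 * (η i * u i)) + η j * (η i * u i ^ 2) :=
      fun j => by ring
    rw [Finset.sum_congr rfl fun j _ => h1 j, Finset.sum_add_distrib, Finset.sum_sub_distrib,
      ← Finset.mul_sum, ← Finset.sum_mul, ← Finset.sum_mul, ← hρ, hηsum]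
    ring
  have hB : ∑ i, ∑ j, η i * η j * (u i - u j) ^ 2
      = 2 * ((∑ i, η i * u i ^ 2) - ρ ^ 2) := by
    rw [Finset.sum_congr rfl fun i _ => hB1 i]
    rw [Finset.sum_add_distrib, Finset.sum_sub_distrib, ← Finset.sum_mul, ← Finset.sum_mul,
      ← hρ, hηsum]
    ring
  have hpair : ∀ i j : Fin N, i ≠ j → (u i - u j) ^ 2 ≤ (P i j : ℝ) / μ i j * S := by
    intro i j hij
    set n := P i j with hn
    have htel : u i - u j = ∑ q ∈ Finset.range n, (u (c i j (q + 1)) - u (c i j q)) := by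
      rw [Finset.sum_range_sub (fun q => u (c i j q)), hc0 i j hij, hcP i j hij]
    have hw : ∀ q ∈ Finset.range n, μ i j ≤ k (c i j (q + 1)) (c i j q) * η (c i j q) := by
      intro q hq
      rw [Finset.mem_range] at hq
      exact (hμ i j hij).2 ⟨q + 1, Nat.le_add_left 1 q, by omega, by simp⟩
    have hcs : (u i - u j) ^ 2 ≤ (n : ℝ) * ∑ q ∈ Finset.range n,
        (u (c i j (q + 1)) - u (c i j q)) ^ 2 := by
      rw [htel]
      simpa using sq_sum_le_card_mul_sum_sq
        (s := Finset.range n) (f := fun q => u (c i j (q + 1)) - u (c i j q))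
    have hstep : ∑ q ∈ Finset.range n, (u (c i j (q + 1)) - u (c i j q)) ^ 2
        ≤ (1 / μ i j) * ∑ q ∈ Finset.range n,
          k (c i j (q + 1)) (c i j q) * η (c i j q) * (u (c i j (q + 1)) - u (c i j q)) ^ 2 := by
      rw [Finset.mul_sum]
      apply Finset.sum_le_sum
      intro q hq
      have hμq := hw q hq
      have hμp := hμpos i j hij
      have hsq : (0:ℝ) ≤ (u (c i j (q + 1)) - u (c i j q)) ^ 2 := sq_nonneg _
      have h1 : 1 ≤ 1 / μ i j * (k (c i j (q + 1)) (c i j q) * η (c i j q)) := by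
        rw [one_div, inv_mul_eq_div, le_div_iff₀ hμp, one_mul]
        exact hμq
      calc (u (c i j (q + 1)) - u (c i j q)) ^ 2
          = 1 * (u (c i j (q + 1)) - u (c i j q)) ^ 2 := (one_mul _).symm
        _ ≤ (1 / μ i j * (k (c i j (q + 1)) (c i j q) * η (c i j q)))
              * (u (c i j (q + 1)) - u (c i j q)) ^ 2 :=
            mul_le_mul_of_nonneg_right h1 hsq
        _ = 1 / μ i j * (k (c i j (q + 1)) (c i j q) * η (c i j q)
              * (u (c i j (q + 1)) - u (c i j q)) ^ 2) := by ring
    have hedge : ∑ q ∈ Finset.range n,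
        k (c i j (q + 1)) (c i j q) * η (c i j q) * (u (c i j (q + 1)) - u (c i j q)) ^ 2 ≤ S := by
      set F : Fin N × Fin N → ℝ := fun e => k e.1 e.2 * η e.2 * (u e.1 - u e.2) ^ 2 with hF
      have hFnn : ∀ e : Fin N × Fin N, 0 ≤ F e := by
        intro e
        have h1 := hk e.1 e.2; have h2 := (hηpos e.2).le
        simp only [hF]; positivity
      set φ : ℕ → Fin N × Fin N := fun q => (c i j (q + 1), c i j q) with hφ
      have hinj : ∀ q₁ ∈ Finset.range n, ∀ q₂ ∈ Finset.range n, φ q₁ = φ q₂ → q₁ = q₂ := by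
        intro q₁ hq₁ q₂ hq₂ he
        by_contra hne
        rw [Finset.mem_range] at hq₁ hq₂
        apply hnorep i j hij (q₁ + 1) (q₂ + 1) (Nat.le_add_left 1 q₁) (by omega)
          (Nat.le_add_left 1 q₂) (by omega) (by omega)
        simp only [hφ, Prod.mk.injEq] at he
        simp [he.1, he.2]
      calc ∑ q ∈ Finset.range n,
          k (c i j (q + 1)) (c i j q) * η (c i j q) * (u (c i j (q + 1)) - u (c i j q)) ^ 2
          = ∑ q ∈ Finset.range n, F (φ q) := Finset.sum_congr rfl fun q _ => rfl
        _ = ∑ e ∈ (Finset.range n).image φ, F e := (Finset.sum_image hinj).symm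
        _ ≤ ∑ e ∈ (Finset.univ : Finset (Fin N × Fin N)), F e :=
            Finset.sum_le_sum_of_subset_of_nonneg (Finset.subset_univ _)
              (fun e _ _ => hFnn e)
        _ = S := by
            rw [hS, ← Finset.sum_product', ← Finset.univ_product_univ]
    calc (u i - u j) ^ 2 ≤ (n : ℝ) * ∑ q ∈ Finset.range n,
          (u (c i j (q + 1)) - u (c i j q)) ^ 2 := hcs
      _ ≤ (n : ℝ) * ((1 / μ i j) * ∑ q ∈ Finset.range n,
          k (c i j (q + 1)) (c i j q) * η (c i j q) * (u (c i j (q + 1)) - u (c i j q)) ^ 2) :=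
          mul_le_mul_of_nonneg_left hstep (Nat.cast_nonneg n)
      _ ≤ (n : ℝ) * ((1 / μ i j) * S) :=
          mul_le_mul_of_nonneg_left
            (mul_le_mul_of_nonneg_left hedge (one_div_nonneg.mpr (hμpos i j hij).le))
            (Nat.cast_nonneg n)
      _ = (n : ℝ) / μ i j * S := by ring
  have hmain : ∑ i, ∑ j, η i * η j * (u i - u j) ^ 2 ≤ (1 / γ₂) * S := by
    calc ∑ i, ∑ j, η i * η j * (u i - u j) ^ 2
        ≤ ∑ i, ∑ j, (if i ≠ j then η i * η j * (P i j : ℝ) / μ i j else 0) * S := by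
          apply Finset.sum_le_sum; intro i _
          apply Finset.sum_le_sum; intro j _
          by_cases hij : i = j
          · subst hij; simp
          · rw [if_pos hij]
            have h1 : η i * η j * (u i - u j) ^ 2 ≤ η i * η j * ((P i j : ℝ) / μ i j * S) :=
              mul_le_mul_of_nonneg_left (hpair i j hij)
                (mul_nonneg (hηpos i).le (hηpos j).le)
            calc η i * η j * (u i - u j) ^ 2 ≤ η i * η j * ((P i j : ℝ) / μ i j * S) := h1
              _ = η i * η j * (P i j : ℝ) / μ i j * S := by ring
      _ = (∑ i, ∑ j, if i ≠ j then η i * η j * (P i j : ℝ) / μ i j else 0) * S := by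
          rw [Finset.sum_mul]
          exact Finset.sum_congr rfl fun i _ => (Finset.sum_mul ..).symm
      _ = (1 / γ₂) * S := by rw [← hγ₂]
  have hRHS : ∑ i, ∑ j, (k i j * η j / 2) * (ρv i / η i - ρv j / η j) ^ 2 = S / 2 := by
    rw [hS, Finset.sum_div]
    apply Finset.sum_congr rfl; intro i _
    rw [Finset.sum_div]
    apply Finset.sum_congr rfl; intro j _
    simp only [hu]
    ring
  rw [hRHS]
  calc ∑ i, (ρv i - ρ * η i) ^ 2 / η i = ∑ i, η i * (u i - ρ) ^ 2 :=
        Finset.sum_congr rfl fun i _ => hL i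
    _ = (1 / 2) * ∑ i, ∑ j, η i * η j * (u i - u j) ^ 2 := by rw [hA, hB]; ring
    _ ≤ (1 / 2) * ((1 / γ₂) * S) := by linarith [hmain]
    _ = (1 / γ₂) * (S / 2) := by ring
end

section
/- (Entropy dissipation.) Let (f,ρ) be a classical solution of the kinetic-reaction system on the torus, i.e. f_i : [0,L]^d × ℝ^d × [0,∞) → ℝ (i = 1,…,N_l) and ρ_i : [0,L]^d × [0,∞) → ℝ (i = N_l+1,…,N) are C¹, L-periodic in x, satisfy ∂_t f_i + v·∇_x f_i = Σ_{j=1}^N (k_{ij} ρ_j M_i − k_{ji} f_i) and ∂_t ρ_i = Σ_{j=1}^N (k_{ij} ρ_j − k_{ji} ρ_i) pointwise, and are such that for every t the squared ℋ-norm ‖(f,ρ)(t)‖² and its formal time derivative are finite and differentiation under the integral is justified. Then (d/dt) (1/2)‖(f,ρ)(t)‖² = ⟨L(f,ρ)(t), (f,ρ)(t)⟩ ≤ 0, where ⟨L(f,ρ),(f,ρ)⟩ = Σ_{i=1}^N ∫_{[0,L]^d} ∫_{ℝ^d} (Σ_{j=1}^N (k_{ij} ρ_j M_i − k_{ji} f_i))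 f_i/(η_i M_i) dv dx (with the convention f_i = ρ_i M_i and M_i replaced by the point mass at v = 0 for i > N_l). -/
/-!
Multiplying the kinetic equation by `f_i / (η_i M_i)` and integrating, the transport term
`v · ∇ₓ f_i · f_i / (η_i M_i)` is the `x`-divergence of `v f_i² / (2 η_i M_i)`, whose integral
over a period vanishes; this gives the identity for the derivative of `½‖(f,ρ)‖²`.

For the sign, write `e_i(x)` (`localEnergy`) for the `x`-density of `‖(f,ρ)‖²`. Cauchy–Schwarz
against the weight `η_i M_i`, of mass `η_i`, gives `ρ_i² ≤ η_i e_i`, so the loss term `∑ k_ji e_i`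
dominates `∑ k_ji ρ_i² / η_i`. The gain term `∑ k_ij ρ_j ρ_i / η_i` is bounded by the same quantity
pointwise in `x`, by `2ab ≤ a² + b²` and the balance `∑_j k_ij η_j = (∑_j k_ji) η_i` of the
equilibrium.
-/

open MeasureTheory Finset Real

noncomputable section

/-- Partial derivative in the `l`-th coordinate. -/
def pd {d : ℕ} (g : (Fin d → ℝ) → ℝ) (l : Fin d) (x : Fin d → ℝ) : ℝ :=
  deriv (fun y => g (Function.update x l y)) (x l)

/-- The periodic box `[0,L]^d`. -/
def box (d : ℕ) (L : ℝ) : Set (Fin d → ℝ) := Set.Icc 0 (fun _ => L)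

/-- The squared ℋ-norm of the state `(f,ρ)` at time `t`. -/
def Hsq (d N Nl : ℕ) (L : ℝ) (η : Fin N → ℝ) (Mi : Fin N → (Fin d → ℝ) → ℝ)
    (f : Fin N → (Fin d → ℝ) → (Fin d → ℝ) → ℝ → ℝ)
    (ρ : Fin N → (Fin d → ℝ) → ℝ → ℝ) (t : ℝ) : ℝ :=
  ∑ i : Fin N,
    if (i : ℕ) < Nl then
      ∫ x in box d L, ∫ v, (f i x v t) ^ 2 / (η i * Mi i v)
    else
      ∫ x in box d L, (ρ i x t) ^ 2 / η i

/-- The entropy dissipation `⟨L(f,ρ),(f,ρ)⟩` at time `t` (with the convention that for the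
nonmoving species the velocity variable collapses to the point mass at `v = 0`). -/
def diss (d N Nl : ℕ) (L : ℝ) (k : Fin N → Fin N → ℝ) (η : Fin N → ℝ)
    (Mi : Fin N → (Fin d → ℝ) → ℝ)
    (f : Fin N → (Fin d → ℝ) → (Fin d → ℝ) → ℝ → ℝ)
    (ρ : Fin N → (Fin d → ℝ) → ℝ → ℝ) (t : ℝ) : ℝ :=
  ∑ i : Fin N,
    if (i : ℕ) < Nl then
      ∫ x in box d L, ∫ v,
        (∑ j, (k i j * ρ j x t * Mi i v - k j i * f i x v t)) * f i x v t / (η i * Mi i v)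
    else
      ∫ x in box d L,
        (∑ j, (k i j * ρ j x t - k j i * ρ i x t)) * ρ i x t / η i

namespace KineticReaction

section PartialDerivative

variable {d : ℕ} {g : (Fin d → ℝ) → ℝ} {x : Fin d → ℝ}

theorem hasDerivAt_update_fderiv (hg : DifferentiableAt ℝ g x) (l : Fin d) :
    HasDerivAt (fun y => g (Function.update x l y)) (fderiv ℝ g x (Pi.single l 1)) (x l) := by
  have h := hg.hasFDerivAt
  rw [← Function.update_eq_self l x] at h
  simpa [Function.comp_def] using h.comp_hasDerivAt (x l) (hasDerivAt_update x l (x l))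

theorem pd_eq_fderiv (hg : DifferentiableAt ℝ g x) (l : Fin d) :
    pd g l x = fderiv ℝ g x (Pi.single l 1) :=
  (hasDerivAt_update_fderiv hg l).deriv

theorem hasDerivAt_pd (hg : DifferentiableAt ℝ g x) (l : Fin d) :
    HasDerivAt (fun y => g (Function.update x l y)) (pd g l x) (x l) :=
  pd_eq_fderiv hg l ▸ hasDerivAt_update_fderiv hg l

theorem continuous_pd (hg : ContDiff ℝ 1 g) (l : Fin d) : Continuous (pd g l) := by
  rw [show pd g l = fun x => fderiv ℝ g x (Pi.single l 1) from
    funext fun x => pd_eq_fderiv (hg.differentiable one_ne_zero x) l]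
  exact (hg.continuous_fderiv one_ne_zero).clm_apply continuous_const

theorem pd_sq (hg : DifferentiableAt ℝ g x) (l : Fin d) :
    pd (fun y => g y ^ 2) l x = 2 * g x * pd g l x := by
  have h := (hasDerivAt_pd hg l).pow 2
  rw [Function.update_eq_self] at h
  change deriv ((fun y => g (Function.update x l y)) ^ 2) (x l) = _
  rw [h.deriv]
  ring

end PartialDerivative

section Periodic

theorem shift_insertNth_zero {n : ℕ} (l : Fin (n + 1)) (L : ℝ) (z : Fin n → ℝ) :
    (fun m => l.insertNth (α := fun _ => ℝ) 0 z m + if m = l then L else 0)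
      = l.insertNth L z := by
  funext m
  rcases l.eq_self_or_eq_succAbove m with rfl | ⟨j, rfl⟩ <;> simp

theorem integral_Icc_pd_insertNth_eq_zero {n : ℕ} {L : ℝ} (hL : 0 ≤ L)
    {g : (Fin (n + 1) → ℝ) → ℝ} (hg : ContDiff ℝ 1 g) (l : Fin (n + 1))
    (hper : ∀ x, g (fun m => x m + if m = l then L else 0) = g x) (z : Fin n → ℝ) :
    ∫ y in Set.Icc 0 L, pd g l (l.insertNth y z) = 0 := by
  have hderiv : ∀ y, HasDerivAt (fun y => g (l.insertNth y z)) (pd g l (l.insertNth y z)) y := by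
    intro y
    simpa using hasDerivAt_pd (hg.differentiable one_ne_zero (l.insertNth y z)) l
  have hcont : Continuous fun y => pd g l (l.insertNth y z) :=
    (continuous_pd hg l).comp (continuous_id.finInsertNth (A := fun _ => ℝ) l continuous_const)
  rw [integral_Icc_eq_integral_Ioc, ← intervalIntegral.integral_of_le hL,
    intervalIntegral.integral_eq_sub_of_hasDerivAt (fun y _ => hderiv y)
      (hcont.intervalIntegrable _ _), ← shift_insertNth_zero, hper, sub_self]

theorem integral_box_pd_eq_zero {d : ℕ} {L : ℝ} (hL : 0 ≤ L) {g : (Fin d → ℝ) → ℝ}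
    (hg : ContDiff ℝ 1 g) (l : Fin d)
    (hper : ∀ x, g (fun m => x m + if m = l then L else 0) = g x) :
    ∫ x in box d L, pd g l x = 0 := by
  obtain ⟨n, rfl⟩ : ∃ n, d = n + 1 := Nat.exists_eq_succ_of_ne_zero (Fin.pos l).ne'
  let e := MeasurableEquiv.piFinSuccAbove (fun _ : Fin (n + 1) => ℝ) l
  have hpre : e.symm ⁻¹' box (n + 1) L = Set.Icc 0 L ×ˢ Set.Icc 0 (fun _ => L) := by
    ext p
    exact Fin.insertNth_mem_Icc
  have hint : IntegrableOn (fun p : ℝ × (Fin n → ℝ) => pd g l (l.insertNth p.1 p.2))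
      (Set.Icc 0 L ×ˢ Set.Icc 0 (fun _ => L)) :=
    ((continuous_pd hg l).comp
      (continuous_fst.finInsertNth (A := fun _ => ℝ) l continuous_snd)).continuousOn
      |>.integrableOn_compact (isCompact_Icc.prod isCompact_Icc)
  rw [← (volume_preserving_piFinSuccAbove (fun _ => ℝ) l).symm.setIntegral_preimage_emb
    e.symm.measurableEmbedding, hpre]
  rw [IntegrableOn, Measure.volume_eq_prod, ← Measure.prod_restrict] at hint
  rw [Measure.volume_eq_prod, ← Measure.prod_restrict]
  refine (integral_prod_symm _ hint).trans ?_
  simp only [integral_Icc_pd_insertNth_eq_zero hL hg l hper, integral_zero]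

theorem isCompact_box (d : ℕ) (L : ℝ) : IsCompact (box d L) :=
  isCompact_Icc

instance isFiniteMeasure_restrict_box (d : ℕ) (L : ℝ) :
    IsFiniteMeasure (volume.restrict (box d L)) :=
  isFiniteMeasure_restrict.2 (isCompact_box d L).measure_lt_top.ne

theorem integral_box_transport_mul_self_eq_zero {d : ℕ} {L : ℝ} (hL : 0 ≤ L)
    {g : (Fin d → ℝ) → ℝ} (hg : ContDiff ℝ 1 g)
    (hper : ∀ l x, g (fun m => x m + if m = l then L else 0) = g x) (v : Fin d → ℝ) :
    ∫ x in box d L, (∑ l, v l * pd g l x) * g x = 0 := by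
  have hterm : ∀ l, ∫ x in box d L, v l * (pd g l x * g x) = 0 := by
    intro l
    have hsq_per : ∀ x, (fun y => g y ^ 2) (fun m => x m + if m = l then L else 0) = g x ^ 2 :=
      fun x => by simp only [hper l x]
    have hpt : ∀ x, v l * (pd g l x * g x) = v l / 2 * pd (fun y => g y ^ 2) l x := fun x => by
      rw [pd_sq (hg.differentiable one_ne_zero x)]
      ring
    simp only [hpt, integral_const_mul, integral_box_pd_eq_zero hL (hg.pow 2) l hsq_per, mul_zero]
  have hint : ∀ l, IntegrableOn (fun x => v l * (pd g l x * g x)) (box d L) :=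
    fun l => (continuous_const.mul ((continuous_pd hg l).mul hg.continuous)).continuousOn
      |>.integrableOn_compact (isCompact_box d L)
  simp only [sum_mul, mul_assoc]
  rw [integral_finsetSum _ fun l _ => hint l]
  exact sum_eq_zero fun l _ => hterm l

end Periodic

def maxwellian (d : ℕ) (θ : ℝ) (v : Fin d → ℝ) : ℝ :=
  (2 * π * θ) ^ (-(d : ℝ) / 2) * Real.exp (-(∑ l, (v l) ^ 2) / (2 * θ))

section Maxwellian

theorem maxwellian_eq_mul_prod (d : ℕ) (θ : ℝ) (v : Fin d → ℝ) :
    maxwellian d θ v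
      = (2 * π * θ) ^ (-(d : ℝ) / 2) * ∏ l, Real.exp (-(1 / (2 * θ)) * v l ^ 2) := by
  rw [maxwellian, ← Real.exp_sum, ← mul_sum]
  ring_nf

variable {d : ℕ} {θ : ℝ}

theorem maxwellian_pos (hθ : 0 < θ) (v : Fin d → ℝ) : 0 < maxwellian d θ v := by
  unfold maxwellian
  positivity

theorem integrable_maxwellian (hθ : 0 < θ) : Integrable (maxwellian d θ) := by
  simp only [funext (maxwellian_eq_mul_prod d θ)]
  exact (Integrable.fintype_prod fun _ => integrable_exp_neg_mul_sq (by positivity)).const_mul _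

theorem integral_maxwellian (hθ : 0 < θ) : ∫ v, maxwellian d θ v = 1 := by
  have h2πθ : 0 < 2 * π * θ := by positivity
  simp only [maxwellian_eq_mul_prod, integral_const_mul]
  rw [volume_pi,
    integral_fintype_prod_eq_pow (ι := Fin d) fun x => Real.exp (-(1 / (2 * θ)) * x ^ 2),
    integral_gaussian, Fintype.card_fin, show π / (1 / (2 * θ)) = 2 * π * θ by field_simp,
    Real.sqrt_eq_rpow, ← Real.rpow_mul_natCast h2πθ.le, ← Real.rpow_add h2πθ]
  ring_nf
  exact Real.rpow_zero _

end Maxwellian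

section Weighted

variable {α : Type*} [MeasurableSpace α] {μ : Measure α} {F W : α → ℝ}

theorem integrable_of_integrable_sq_div (hW : ∀ a, 0 < W a) (hWint : Integrable W μ)
    (hF : AEStronglyMeasurable F μ) (hF2 : Integrable (fun a => F a ^ 2 / W a) μ) :
    Integrable F μ := by
  refine ((hF2.add hWint).div_const 2).mono' hF (Filter.Eventually.of_forall fun a => ?_)
  have hWa := hW a
  rw [Real.norm_eq_abs, le_div_iff₀ two_pos, Pi.add_apply, div_add' _ _ _ hWa.ne',
    le_div_iff₀ hWa]
  nlinarith [sq_nonneg (|F a| - W a), sq_abs (F a)]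

theorem sq_integral_le_integral_mul_integral_sq_div (hW : ∀ a, 0 < W a)
    (hWint : Integrable W μ) (hF : Integrable F μ)
    (hF2 : Integrable (fun a => F a ^ 2 / W a) μ) :
    (∫ a, F a ∂μ) ^ 2 ≤ (∫ a, W a ∂μ) * ∫ a, F a ^ 2 / W a ∂μ := by
  have hquad : ∀ s : ℝ, 0 ≤ (∫ a, W a ∂μ) * (s * s) + (-2 * ∫ a, F a ∂μ) * s
      + ∫ a, F a ^ 2 / W a ∂μ := by
    intro s
    have hexpand : ∀ a, (F a - s * W a) ^ 2 / W a = F a ^ 2 / W a - 2 * s * F a + s ^ 2 * W a :=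
      fun a => by field_simp [(hW a).ne']; ring
    have h := integral_nonneg (μ := μ) (f := fun a => (F a - s * W a) ^ 2 / W a) fun a =>
      div_nonneg (sq_nonneg _) (hW a).le
    have hF2F : Integrable (fun a => F a ^ 2 / W a - 2 * s * F a) μ := hF2.sub (hF.const_mul _)
    simp only [hexpand] at h
    rw [integral_add hF2F (hWint.const_mul _), integral_sub hF2 (hF.const_mul _),
      integral_const_mul, integral_const_mul] at h
    linarith
  have := discrim_le_zero hquad
  rw [discrim] at this
  linarith

end Weighted

section ReactionForm

variable {N : ℕ} {k : Fin N → Fin N → ℝ} {η : Fin N → ℝ}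

/-- Termwise `2ab ≤ a² + b²` with `a = r i / η i`, `b = r j / η j` and weight `k i j * η j`;
the balance condition turns both halves of the resulting sum into the right-hand side. -/
theorem sum_gain_le_sum_loss (hk : ∀ i j, 0 ≤ k i j) (hη : ∀ i, 0 < η i)
    (hbal : ∀ i, ∑ j, (k i j * η j - k j i * η i) = 0) (r : Fin N → ℝ) :
    ∑ i, (∑ j, k i j * r j) * r i / η i ≤ ∑ i, (∑ j, k j i) * (r i ^ 2 / η i) := by
  have hbal' : ∀ i, ∑ j, k i j * η j = (∑ j, k j i) * η i := fun i => by
    rw [sum_mul, ← sub_eq_zero, ← sum_sub_distrib, hbal i]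
  have hamgm : ∀ i j, k i j * r j * r i / η i
      ≤ k i j * η j * (r i / η i) ^ 2 / 2 + k i j * (r j ^ 2 / η j) / 2 := by
    intro i j
    have hηi := (hη i).ne'
    have hηj := (hη j).ne'
    have h := mul_nonneg (mul_nonneg (hk i j) (hη j).le) (sq_nonneg (r i / η i - r j / η j))
    have hlhs : k i j * r j * r i / η i = k i j * η j * (r i / η i) * (r j / η j) := by
      field_simp
    have hrhs : k i j * (r j ^ 2 / η j) = k i j * η j * (r j / η j) ^ 2 := by
      field_simp
    rw [hlhs, hrhs]
    nlinarith [h]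
  calc ∑ i, (∑ j, k i j * r j) * r i / η i
      = ∑ i, ∑ j, k i j * r j * r i / η i := by simp only [sum_mul, sum_div]
    _ ≤ ∑ i, ∑ j, (k i j * η j * (r i / η i) ^ 2 / 2 + k i j * (r j ^ 2 / η j) / 2) :=
        sum_le_sum fun i _ => sum_le_sum fun j _ => hamgm i j
    _ = ∑ i, (∑ j, k i j * η j) * (r i / η i) ^ 2 / 2
          + ∑ i, (∑ j, k j i) * (r i ^ 2 / η i) / 2 := by
        simp only [sum_add_distrib, sum_mul, sum_div]
        exact congrArg _ sum_comm
    _ = ∑ i, (∑ j, k j i) * (r i ^ 2 / η i) := by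
        rw [← sum_add_distrib]
        refine sum_congr rfl fun i _ => ?_
        rw [hbal' i]
        field_simp [(hη i).ne']
        ring

theorem sum_reaction_form_nonpos (hk : ∀ i j, 0 ≤ k i j) (hη : ∀ i, 0 < η i)
    (hbal : ∀ i, ∑ j, (k i j * η j - k j i * η i) = 0) (r e : Fin N → ℝ)
    (hre : ∀ i, r i ^ 2 ≤ η i * e i) :
    ∑ i, ((∑ j, k i j * r j) * r i / η i - (∑ j, k j i) * e i) ≤ 0 := by
  have hloss : ∀ i, (∑ j, k j i) * (r i ^ 2 / η i) ≤ (∑ j, k j i) * e i := fun i =>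
    mul_le_mul_of_nonneg_left ((div_le_iff₀' (hη i)).2 (hre i))
      (sum_nonneg fun j _ => hk j i)
  rw [sum_sub_distrib, sub_nonpos]
  exact (sum_gain_le_sum_loss hk hη hbal r).trans (sum_le_sum fun i _ => hloss i)

theorem sum_integral_reaction_form_nonpos {α : Type*} [MeasurableSpace α] {μ : Measure α}
    (hk : ∀ i j, 0 ≤ k i j) (hη : ∀ i, 0 < η i)
    (hbal : ∀ i, ∑ j, (k i j * η j - k j i * η i) = 0) (r e : Fin N → α → ℝ)
    (hr : ∀ i, AEStronglyMeasurable (r i) μ) (he : ∀ i, Integrable (e i) μ)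
    (hre : ∀ i, ∀ᵐ a ∂μ, r i a ^ 2 ≤ η i * e i a) :
    ∑ i, ∫ a, ((∑ j, k i j * r j a) * r i a / η i - (∑ j, k j i) * e i a) ∂μ ≤ 0 := by
  have hL2 : ∀ i, MemLp (r i) 2 μ := fun i => by
    refine (memLp_two_iff_integrable_sq (hr i)).2 <|
      ((he i).const_mul (η i)).mono' ((hr i).pow 2) ?_
    filter_upwards [hre i] with a ha
    rwa [Real.norm_eq_abs, abs_of_nonneg (sq_nonneg _)]
  have hint : ∀ i, Integrable
      (fun a => (∑ j, k i j * r j a) * r i a / η i - (∑ j, k j i) * e i a) μ := by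
    intro i
    have hgain : (fun a => (∑ j, k i j * r j a) * r i a / η i)
        = fun a => ∑ j, k i j / η i * (r j a * r i a) := funext fun a => by
      rw [sum_mul, sum_div]
      exact sum_congr rfl fun j _ => by ring
    refine Integrable.sub ?_ ((he i).const_mul _)
    rw [hgain]
    exact integrable_finsetSum _ fun j _ => ((hL2 j).integrable_mul (hL2 i)).const_mul _
  rw [← integral_finsetSum _ fun i _ => hint i]
  refine integral_nonpos_of_ae ?_
  filter_upwards [ae_all_iff.2 hre] with a ha
  exact sum_reaction_form_nonpos hk hη hbal (fun i => r i a) (fun i => e i a) ha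

end ReactionForm

section FiberIntegrals

variable {α β : Type*} [MeasurableSpace α] [MeasurableSpace β] {μ : Measure α} {ν : Measure β}
  [SFinite μ] [SFinite ν] {F : α → β → ℝ}

theorem integrable_restrict_prod_of_integrableOn {s : Set α} {g : α × β → ℝ}
    (h : IntegrableOn g (s ×ˢ Set.univ) (μ.prod ν)) : Integrable g ((μ.restrict s).prod ν) := by
  rwa [Measure.restrict_prod_eq_prod_univ]

theorem ae_sq_integral_le_of_integrable_prod {W : β → ℝ} (hW : ∀ v, 0 < W v)
    (hWint : Integrable W ν) (hF : Integrable (fun p : α × β => F p.1 p.2) (μ.prod ν))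
    (hF2 : Integrable (fun p : α × β => F p.1 p.2 ^ 2 / W p.2) (μ.prod ν)) :
    ∀ᵐ x ∂μ, (∫ v, F x v ∂ν) ^ 2 ≤ (∫ v, W v ∂ν) * ∫ v, F x v ^ 2 / W v ∂ν := by
  filter_upwards [hF.prod_right_ae, hF2.prod_right_ae] with x hFx hF2x
  exact sq_integral_le_integral_mul_integral_sq_div hW hWint hFx hF2x

theorem ae_integral_reaction_mul_div_eq {M : β → ℝ} {c : ℝ} (hM : ∀ v, M v ≠ 0) (hc : c ≠ 0)
    (hF : Integrable (fun p : α × β => F p.1 p.2) (μ.prod ν))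
    (hF2 : Integrable (fun p : α × β => F p.1 p.2 ^ 2 / (c * M p.2)) (μ.prod ν))
    (a b : α → ℝ) :
    ∀ᵐ x ∂μ, ∫ v, (a x * M v - b x * F x v) * F x v / (c * M v) ∂ν
      = a x * (∫ v, F x v ∂ν) / c - b x * ∫ v, F x v ^ 2 / (c * M v) ∂ν := by
  filter_upwards [hF.prod_right_ae, hF2.prod_right_ae] with x hFx hF2x
  have hpt : ∀ v, (a x * M v - b x * F x v) * F x v / (c * M v)
      = a x / c * F x v - b x * (F x v ^ 2 / (c * M v)) := fun v => by
    field_simp [hM v]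
  simp only [hpt]
  rw [integral_sub (hFx.const_mul _) (hF2x.const_mul _), integral_const_mul, integral_const_mul]
  ring

end FiberIntegrals

section Transport

variable {d : ℕ} {L : ℝ} {F : (Fin d → ℝ) → (Fin d → ℝ) → ℝ} {W : (Fin d → ℝ) → ℝ}

theorem integral_transport_mul_div_eq_zero (hL : 0 ≤ L)
    (hF : ∀ v, ContDiff ℝ 1 (fun x => F x v))
    (hper : ∀ l x v, F (fun m => x m + if m = l then L else 0) v = F x v)
    (hint : Integrable (fun p : (Fin d → ℝ) × (Fin d → ℝ) =>
      (∑ l, p.2 l * pd (fun y => F y p.2) l p.1) * F p.1 p.2 / W p.2)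
      ((volume.restrict (box d L)).prod volume)) :
    ∫ p : (Fin d → ℝ) × (Fin d → ℝ), (∑ l, p.2 l * pd (fun y => F y p.2) l p.1) * F p.1 p.2 / W p.2
      ∂((volume.restrict (box d L)).prod volume) = 0 := by
  rw [integral_prod_symm _ hint]
  simp only [integral_div,
    integral_box_transport_mul_self_eq_zero hL (hF _) (fun l x => hper l x _), zero_div,
    integral_zero]

theorem half_integral_two_mul_deriv_eq (hL : 0 ≤ L) {Ft R : (Fin d → ℝ) → (Fin d → ℝ) → ℝ}
    (hF : ∀ v, ContDiff ℝ 1 (fun x => F x v))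
    (hper : ∀ l x v, F (fun m => x m + if m = l then L else 0) v = F x v)
    (heq : ∀ x v, Ft x v + ∑ l, v l * pd (fun y => F y v) l x = R x v)
    (hint_t : Integrable (fun p : (Fin d → ℝ) × (Fin d → ℝ) => Ft p.1 p.2 * F p.1 p.2 / W p.2)
      ((volume.restrict (box d L)).prod volume))
    (hint_x : Integrable (fun p : (Fin d → ℝ) × (Fin d → ℝ) =>
      (∑ l, p.2 l * pd (fun y => F y p.2) l p.1) * F p.1 p.2 / W p.2)
      ((volume.restrict (box d L)).prod volume)) :
    1 / 2 * ∫ x in box d L, ∫ v, 2 * F x v * Ft x v / W v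
      = ∫ x in box d L, ∫ v, R x v * F x v / W v := by
  have hR : (fun p : (Fin d → ℝ) × (Fin d → ℝ) => R p.1 p.2 * F p.1 p.2 / W p.2)
      = fun p : (Fin d → ℝ) × (Fin d → ℝ) => Ft p.1 p.2 * F p.1 p.2 / W p.2
        + (∑ l, p.2 l * pd (fun y => F y p.2) l p.1) * F p.1 p.2 / W p.2 := by
    funext p
    rw [← heq]
    ring
  have hint_R : Integrable (fun p : (Fin d → ℝ) × (Fin d → ℝ) => R p.1 p.2 * F p.1 p.2 / W p.2)
      ((volume.restrict (box d L)).prod volume) := hR ▸ hint_t.add hint_x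
  have htwo : ∀ x v, 2 * F x v * Ft x v / W v = 2 * (Ft x v * F x v / W v) := fun x v => by ring
  simp only [htwo, integral_const_mul]
  rw [← integral_prod _ hint_t, ← integral_prod _ hint_R, hR, integral_add hint_t hint_x,
    integral_transport_mul_div_eq_zero hL hF hper hint_x]
  ring

end Transport

def localEnergy {d N : ℕ} (Nl : ℕ) (η : Fin N → ℝ) (Mi : Fin N → (Fin d → ℝ) → ℝ)
    (f : Fin N → (Fin d → ℝ) → (Fin d → ℝ) → ℝ → ℝ) (ρ : Fin N → (Fin d → ℝ) → ℝ → ℝ)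
    (t : ℝ) (i : Fin N) (x : Fin d → ℝ) : ℝ :=
  if (i : ℕ) < Nl then ∫ v, f i x v t ^ 2 / (η i * Mi i v) else ρ i x t ^ 2 / η i

section System

variable {d N Nl : ℕ} {L : ℝ} {k : Fin N → Fin N → ℝ} {η : Fin N → ℝ}
  {Mi : Fin N → (Fin d → ℝ) → ℝ} {f : Fin N → (Fin d → ℝ) → (Fin d → ℝ) → ℝ → ℝ}
  {ρ : Fin N → (Fin d → ℝ) → ℝ → ℝ} {t : ℝ}

theorem half_formalDeriv_eq_diss (hL : 0 ≤ L)
    (hf : ∀ i : Fin N, (i : ℕ) < Nl → ∀ v, ContDiff ℝ 1 (fun x => f i x v t))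
    (hfper : ∀ i : Fin N, (i : ℕ) < Nl → ∀ (l : Fin d) x v,
      f i (fun m => x m + if m = l then L else 0) v t = f i x v t)
    (hpde : ∀ i : Fin N, (i : ℕ) < Nl → ∀ x v,
      deriv (fun s => f i x v s) t + ∑ l, v l * pd (fun y => f i y v t) l x
        = ∑ j, (k i j * ρ j x t * Mi i v - k j i * f i x v t))
    (hode : ∀ i : Fin N, Nl ≤ (i : ℕ) → ∀ x,
      deriv (fun s => ρ i x s) t = ∑ j, (k i j * ρ j x t - k j i * ρ i x t))
    (hfin_t : ∀ i : Fin N, (i : ℕ) < Nl →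
      IntegrableOn (fun p : (Fin d → ℝ) × (Fin d → ℝ) =>
        deriv (fun s => f i p.1 p.2 s) t * f i p.1 p.2 t / (η i * Mi i p.2))
        ((box d L) ×ˢ Set.univ))
    (hfin_x : ∀ i : Fin N, (i : ℕ) < Nl →
      IntegrableOn (fun p : (Fin d → ℝ) × (Fin d → ℝ) =>
        (∑ l, p.2 l * pd (fun y => f i y p.2 t) l p.1) * f i p.1 p.2 t / (η i * Mi i p.2))
        ((box d L) ×ˢ Set.univ)) :
    1 / 2 * (∑ i : Fin N,
      if (i : ℕ) < Nl then
        ∫ x in box d L, ∫ v, 2 * f i x v t * deriv (fun s => f i x v s) t / (η i * Mi i v)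
      else
        ∫ x in box d L, 2 * ρ i x t * deriv (fun s => ρ i x s) t / η i)
      = diss d N Nl L k η Mi f ρ t := by
  rw [diss, mul_sum]
  refine sum_congr rfl fun i _ => ?_
  split_ifs with hi
  · exact half_integral_two_mul_deriv_eq hL (hf i hi) (hfper i hi) (hpde i hi)
      (integrable_restrict_prod_of_integrableOn (hfin_t i hi))
      (integrable_restrict_prod_of_integrableOn (hfin_x i hi))
  · rw [← integral_const_mul]
    refine integral_congr_ae (Filter.Eventually.of_forall fun x => ?_)
    simp only [hode i (not_lt.1 hi) x]
    ring

theorem integrable_kinetic_density (hη : ∀ i, 0 < η i)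
    (hMpos : ∀ i : Fin N, (i : ℕ) < Nl → ∀ v, 0 < Mi i v)
    (hMint : ∀ i : Fin N, (i : ℕ) < Nl → Integrable (Mi i))
    (hfcont : ∀ i : Fin N, (i : ℕ) < Nl →
      Continuous fun p : (Fin d → ℝ) × (Fin d → ℝ) => f i p.1 p.2 t)
    (hfin : ∀ i : Fin N, (i : ℕ) < Nl →
      IntegrableOn (fun p : (Fin d → ℝ) × (Fin d → ℝ) =>
        (f i p.1 p.2 t) ^ 2 / (η i * Mi i p.2)) ((box d L) ×ˢ Set.univ))
    {i : Fin N} (hi : (i : ℕ) < Nl) :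
    Integrable (fun p : (Fin d → ℝ) × (Fin d → ℝ) => f i p.1 p.2 t)
      ((volume.restrict (box d L)).prod volume) :=
  integrable_of_integrable_sq_div (W := fun p => η i * Mi i p.2)
    (fun p => mul_pos (hη i) (hMpos i hi p.2)) (((hMint i hi).const_mul _).comp_snd _)
    (hfcont i hi).aestronglyMeasurable (integrable_restrict_prod_of_integrableOn (hfin i hi))

theorem diss_eq_sum_integral_reaction_form (hη : ∀ i, 0 < η i)
    (hMpos : ∀ i : Fin N, (i : ℕ) < Nl → ∀ v, 0 < Mi i v)
    (hMint : ∀ i : Fin N, (i : ℕ) < Nl → Integrable (Mi i))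
    (hfcont : ∀ i : Fin N, (i : ℕ) < Nl →
      Continuous fun p : (Fin d → ℝ) × (Fin d → ℝ) => f i p.1 p.2 t)
    (hρdef : ∀ j : Fin N, (j : ℕ) < Nl → ∀ x, ρ j x t = ∫ v, f j x v t)
    (hfin : ∀ i : Fin N, (i : ℕ) < Nl →
      IntegrableOn (fun p : (Fin d → ℝ) × (Fin d → ℝ) =>
        (f i p.1 p.2 t) ^ 2 / (η i * Mi i p.2)) ((box d L) ×ˢ Set.univ)) :
    diss d N Nl L k η Mi f ρ t = ∑ i, ∫ x in box d L,
      ((∑ j, k i j * ρ j x t) * ρ i x t / η i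
        - (∑ j, k j i) * localEnergy Nl η Mi f ρ t i x) := by
  rw [diss]
  refine sum_congr rfl fun i _ => ?_
  split_ifs with hi
  · refine integral_congr_ae ?_
    filter_upwards [ae_integral_reaction_mul_div_eq (F := fun x v => f i x v t)
      (fun v => (hMpos i hi v).ne') (hη i).ne'
      (integrable_kinetic_density hη hMpos hMint hfcont hfin hi)
      (integrable_restrict_prod_of_integrableOn (hfin i hi))
      (fun x => ∑ j, k i j * ρ j x t) (fun _ => ∑ j, k j i)] with x hx
    simp only [sum_sub_distrib, ← sum_mul, hx, localEnergy, if_pos hi, hρdef i hi]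
  · refine integral_congr_ae (Filter.Eventually.of_forall fun x => ?_)
    simp only [localEnergy, if_neg hi, sum_sub_distrib, ← sum_mul]
    ring

theorem ae_sq_density_le_localEnergy (hη : ∀ i, 0 < η i)
    (hMpos : ∀ i : Fin N, (i : ℕ) < Nl → ∀ v, 0 < Mi i v)
    (hMint : ∀ i : Fin N, (i : ℕ) < Nl → Integrable (Mi i))
    (hM1 : ∀ i : Fin N, (i : ℕ) < Nl → ∫ v, Mi i v = 1)
    (hfcont : ∀ i : Fin N, (i : ℕ) < Nl →
      Continuous fun p : (Fin d → ℝ) × (Fin d → ℝ) => f i p.1 p.2 t)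
    (hρdef : ∀ j : Fin N, (j : ℕ) < Nl → ∀ x, ρ j x t = ∫ v, f j x v t)
    (hfin : ∀ i : Fin N, (i : ℕ) < Nl →
      IntegrableOn (fun p : (Fin d → ℝ) × (Fin d → ℝ) =>
        (f i p.1 p.2 t) ^ 2 / (η i * Mi i p.2)) ((box d L) ×ˢ Set.univ)) (i : Fin N) :
    ∀ᵐ x ∂(volume.restrict (box d L)), ρ i x t ^ 2 ≤ η i * localEnergy Nl η Mi f ρ t i x := by
  by_cases hi : (i : ℕ) < Nl
  · have hW : ∀ v, 0 < η i * Mi i v := fun v => mul_pos (hη i) (hMpos i hi v)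
    filter_upwards [ae_sq_integral_le_of_integrable_prod (F := fun x v => f i x v t) hW
      ((hMint i hi).const_mul _) (integrable_kinetic_density hη hMpos hMint hfcont hfin hi)
      (integrable_restrict_prod_of_integrableOn (hfin i hi))] with x hx
    simpa only [localEnergy, if_pos hi, hρdef i hi, integral_const_mul, hM1 i hi, mul_one]
      using hx
  · refine Filter.Eventually.of_forall fun x => ?_
    rw [localEnergy, if_neg hi, mul_div_cancel₀ _ (hη i).ne']

theorem diss_nonpos (hk : ∀ i j, 0 ≤ k i j) (hη : ∀ i, 0 < η i)
    (hbal : ∀ i, ∑ j, (k i j * η j - k j i * η i) = 0)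
    (hMpos : ∀ i : Fin N, (i : ℕ) < Nl → ∀ v, 0 < Mi i v)
    (hMint : ∀ i : Fin N, (i : ℕ) < Nl → Integrable (Mi i))
    (hM1 : ∀ i : Fin N, (i : ℕ) < Nl → ∫ v, Mi i v = 1)
    (hfcont : ∀ i : Fin N, (i : ℕ) < Nl →
      Continuous fun p : (Fin d → ℝ) × (Fin d → ℝ) => f i p.1 p.2 t)
    (hρcont : ∀ i : Fin N, Nl ≤ (i : ℕ) → Continuous fun x => ρ i x t)
    (hρdef : ∀ j : Fin N, (j : ℕ) < Nl → ∀ x, ρ j x t = ∫ v, f j x v t)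
    (hfin : ∀ i : Fin N, (i : ℕ) < Nl →
      IntegrableOn (fun p : (Fin d → ℝ) × (Fin d → ℝ) =>
        (f i p.1 p.2 t) ^ 2 / (η i * Mi i p.2)) ((box d L) ×ˢ Set.univ)) :
    diss d N Nl L k η Mi f ρ t ≤ 0 := by
  have hρ : ∀ i, AEStronglyMeasurable (fun x => ρ i x t) (volume.restrict (box d L)) := by
    intro i
    by_cases hi : (i : ℕ) < Nl
    · refine AEStronglyMeasurable.congr ?_ (Filter.Eventually.of_forall (hρdef i hi · |>.symm))
      exact (integrable_kinetic_density hη hMpos hMint hfcont hfin hi).integral_prod_left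
        |>.aestronglyMeasurable
    · exact (hρcont i (not_lt.1 hi)).aestronglyMeasurable
  have he : ∀ i, Integrable (localEnergy Nl η Mi f ρ t i) (volume.restrict (box d L)) := by
    intro i
    by_cases hi : (i : ℕ) < Nl
    · rw [show localEnergy Nl η Mi f ρ t i = _ from funext fun x => if_pos hi]
      exact (integrable_restrict_prod_of_integrableOn (hfin i hi)).integral_prod_left
    · rw [show localEnergy Nl η Mi f ρ t i = _ from funext fun x => if_neg hi]
      exact (((hρcont i (not_lt.1 hi)).pow 2).div_const (η i)).continuousOn.integrableOn_compact
        (isCompact_box d L)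
  rw [diss_eq_sum_integral_reaction_form hη hMpos hMint hfcont hρdef hfin]
  exact sum_integral_reaction_form_nonpos hk hη hbal _ _ hρ he
    (ae_sq_density_le_localEnergy hη hMpos hMint hM1 hfcont hρdef hfin)

end System

end KineticReaction

open KineticReaction

theorem statement12_general
    (d N Nl : ℕ)
    (L : ℝ) (hL : 0 < L)
    (k : Fin N → Fin N → ℝ) (hk : ∀ i j, 0 ≤ k i j)
    (θ : Fin N → ℝ) (hθ : ∀ i : Fin N, (i : ℕ) < Nl → 0 < θ i)
    (Mi : Fin N → (Fin d → ℝ) → ℝ)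
    (hMi : ∀ i : Fin N, (i : ℕ) < Nl → ∀ v,
      Mi i v = (2 * π * θ i) ^ (-(d : ℝ) / 2) * Real.exp (-(∑ l, (v l) ^ 2) / (2 * θ i)))
    (η : Fin N → ℝ) (hηpos : ∀ i, 0 < η i)
    (hηbal : ∀ i, ∑ j, (k i j * η j - k j i * η i) = 0)
    (f : Fin N → (Fin d → ℝ) → (Fin d → ℝ) → ℝ → ℝ)
    (ρ : Fin N → (Fin d → ℝ) → ℝ → ℝ)
    -- C¹ regularity
    (hfC1 : ∀ i : Fin N, (i : ℕ) < Nl →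
      ContDiff ℝ 1 (fun p : (Fin d → ℝ) × (Fin d → ℝ) × ℝ => f i p.1 p.2.1 p.2.2))
    (hρC1 : ∀ i : Fin N, Nl ≤ (i : ℕ) →
      ContDiff ℝ 1 (fun p : (Fin d → ℝ) × ℝ => ρ i p.1 p.2))
    -- L-periodicity in x
    (hfper : ∀ i : Fin N, (i : ℕ) < Nl → ∀ (l : Fin d) x v t,
      f i (fun m => x m + if m = l then L else 0) v t = f i x v t)
    -- position densities of the kinetic species
    (hρdef : ∀ j : Fin N, (j : ℕ) < Nl → ∀ x t, ρ j x t = ∫ v, f j x v t)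
    -- the kinetic-reaction equations
    (hpde : ∀ i : Fin N, (i : ℕ) < Nl → ∀ x v t, 0 ≤ t →
      deriv (fun s => f i x v s) t + ∑ l, v l * pd (fun y => f i y v t) l x
        = ∑ j, (k i j * ρ j x t * Mi i v - k j i * f i x v t))
    (hode : ∀ i : Fin N, Nl ≤ (i : ℕ) → ∀ x t, 0 ≤ t →
      deriv (fun s => ρ i x s) t = ∑ j, (k i j * ρ j x t - k j i * ρ i x t))
    -- finiteness of the squared ℋ-norm and of its formal time derivative
    (hfin1 : ∀ i : Fin N, (i : ℕ) < Nl → ∀ t : ℝ, 0 ≤ t →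
      IntegrableOn (fun p : (Fin d → ℝ) × (Fin d → ℝ) =>
        (f i p.1 p.2 t) ^ 2 / (η i * Mi i p.2)) ((box d L) ×ˢ Set.univ))
    (hfin2 : ∀ i : Fin N, (i : ℕ) < Nl → ∀ t : ℝ, 0 ≤ t →
      IntegrableOn (fun p : (Fin d → ℝ) × (Fin d → ℝ) =>
        deriv (fun s => f i p.1 p.2 s) t * f i p.1 p.2 t / (η i * Mi i p.2))
        ((box d L) ×ˢ Set.univ))
    (hfin3 : ∀ i : Fin N, (i : ℕ) < Nl → ∀ t : ℝ, 0 ≤ t →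
      IntegrableOn (fun p : (Fin d → ℝ) × (Fin d → ℝ) =>
        (∑ l, p.2 l * pd (fun y => f i y p.2 t) l p.1) * f i p.1 p.2 t / (η i * Mi i p.2))
        ((box d L) ×ˢ Set.univ))
    -- differentiation under the integral sign is justified
    (hder : ∀ t : ℝ, 0 ≤ t →
      HasDerivAt (fun s => Hsq d N Nl L η Mi f ρ s)
        (∑ i : Fin N,
          if (i : ℕ) < Nl then
            ∫ x in box d L, ∫ v,
              2 * f i x v t * deriv (fun s => f i x v s) t / (η i * Mi i v)
          else
            ∫ x in box d L, 2 * ρ i x t * deriv (fun s => ρ i x s) t / η i) t) :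
    ∀ t : ℝ, 0 ≤ t →
      HasDerivAt (fun s => (1 / 2) * Hsq d N Nl L η Mi f ρ s)
        (diss d N Nl L k η Mi f ρ t) t ∧
      diss d N Nl L k η Mi f ρ t ≤ 0 := by
  intro t ht
  have hM : ∀ i : Fin N, (i : ℕ) < Nl → Mi i = maxwellian d (θ i) := fun i hi => funext (hMi i hi)
  have hfC1x : ∀ i : Fin N, (i : ℕ) < Nl → ∀ v, ContDiff ℝ 1 fun x => f i x v t := fun i hi v =>
    (hfC1 i hi).comp (contDiff_id.prodMk (contDiff_const (c := (v, t))))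
  have hfcont : ∀ i : Fin N, (i : ℕ) < Nl →
      Continuous fun p : (Fin d → ℝ) × (Fin d → ℝ) => f i p.1 p.2 t := fun i hi =>
    (hfC1 i hi).continuous.comp (continuous_fst.prodMk (continuous_snd.prodMk continuous_const))
  have hρcont : ∀ i : Fin N, Nl ≤ (i : ℕ) → Continuous fun x => ρ i x t := fun i hi =>
    (hρC1 i hi).continuous.comp (continuous_id.prodMk continuous_const)
  refine ⟨?_, diss_nonpos hk hηpos hηbal (fun i hi => hM i hi ▸ maxwellian_pos (hθ i hi))
    (fun i hi => hM i hi ▸ integrable_maxwellian (hθ i hi))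
    (fun i hi => hM i hi ▸ integral_maxwellian (hθ i hi)) hfcont hρcont
    (fun j hj x => hρdef j hj x t)
    (fun i hi => hfin1 i hi t ht)⟩
  rw [← half_formalDeriv_eq_diss hL.le hfC1x (fun i hi l x v => hfper i hi l x v t)
    (fun i hi x v => hpde i hi x v t ht) (fun i hi x => hode i hi x t ht)
    (fun i hi => hfin2 i hi t ht) (fun i hi => hfin3 i hi t ht)]
  exact (hder t ht).const_mul _

/-- Entropy dissipation on the torus: for a classical solution of the kinetic-reaction system,
`(d/dt)(1/2)‖(f,ρ)(t)‖² = ⟨L(f,ρ)(t),(f,ρ)(t)⟩ ≤ 0`. -/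
theorem statement12
    (d N Nl : ℕ) (hd : 1 ≤ d) (hN : 2 ≤ N) (hNl : 1 ≤ Nl) (hNlN : Nl ≤ N)
    (L : ℝ) (hL : 0 < L)
    (k : Fin N → Fin N → ℝ) (hk : ∀ i j, 0 ≤ k i j)
    -- Assumption A1
    (hA1 : ∀ i j : Fin N, Relation.ReflTransGen (fun a b => 0 < k b a) j i)
    (θ : Fin N → ℝ) (hθ : ∀ i : Fin N, (i : ℕ) < Nl → 0 < θ i)
    (Mi : Fin N → (Fin d → ℝ) → ℝ)
    (hMi : ∀ i : Fin N, (i : ℕ) < Nl → ∀ v,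
      Mi i v = (2 * π * θ i) ^ (-(d : ℝ) / 2) * Real.exp (-(∑ l, (v l) ^ 2) / (2 * θ i)))
    (η : Fin N → ℝ) (hηpos : ∀ i, 0 < η i) (hηsum : ∑ i, η i = 1)
    (hηbal : ∀ i, ∑ j, (k i j * η j - k j i * η i) = 0)
    (f : Fin N → (Fin d → ℝ) → (Fin d → ℝ) → ℝ → ℝ)
    (ρ : Fin N → (Fin d → ℝ) → ℝ → ℝ)
    -- C¹ regularity
    (hfC1 : ∀ i : Fin N, (i : ℕ) < Nl →
      ContDiff ℝ 1 (fun p : (Fin d → ℝ) × (Fin d → ℝ) × ℝ => f i p.1 p.2.1 p.2.2))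
    (hρC1 : ∀ i : Fin N, Nl ≤ (i : ℕ) →
      ContDiff ℝ 1 (fun p : (Fin d → ℝ) × ℝ => ρ i p.1 p.2))
    -- L-periodicity in x
    (hfper : ∀ i : Fin N, (i : ℕ) < Nl → ∀ (l : Fin d) x v t,
      f i (fun m => x m + if m = l then L else 0) v t = f i x v t)
    (hρper : ∀ i : Fin N, Nl ≤ (i : ℕ) → ∀ (l : Fin d) x t,
      ρ i (fun m => x m + if m = l then L else 0) t = ρ i x t)
    -- position densities of the kinetic species
    (hρdef : ∀ j : Fin N, (j : ℕ) < Nl → ∀ x t, ρ j x t = ∫ v, f j x v t)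
    -- the kinetic-reaction equations
    (hpde : ∀ i : Fin N, (i : ℕ) < Nl → ∀ x v t, 0 ≤ t →
      deriv (fun s => f i x v s) t + ∑ l, v l * pd (fun y => f i y v t) l x
        = ∑ j, (k i j * ρ j x t * Mi i v - k j i * f i x v t))
    (hode : ∀ i : Fin N, Nl ≤ (i : ℕ) → ∀ x t, 0 ≤ t →
      deriv (fun s => ρ i x s) t = ∑ j, (k i j * ρ j x t - k j i * ρ i x t))
    -- finiteness of the squared ℋ-norm and of its formal time derivative
    (hfin1 : ∀ i : Fin N, (i : ℕ) < Nl → ∀ t : ℝ, 0 ≤ t →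
      IntegrableOn (fun p : (Fin d → ℝ) × (Fin d → ℝ) =>
        (f i p.1 p.2 t) ^ 2 / (η i * Mi i p.2)) ((box d L) ×ˢ Set.univ))
    (hfin2 : ∀ i : Fin N, (i : ℕ) < Nl → ∀ t : ℝ, 0 ≤ t →
      IntegrableOn (fun p : (Fin d → ℝ) × (Fin d → ℝ) =>
        deriv (fun s => f i p.1 p.2 s) t * f i p.1 p.2 t / (η i * Mi i p.2))
        ((box d L) ×ˢ Set.univ))
    (hfin3 : ∀ i : Fin N, (i : ℕ) < Nl → ∀ t : ℝ, 0 ≤ t →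
      IntegrableOn (fun p : (Fin d → ℝ) × (Fin d → ℝ) =>
        (∑ l, p.2 l * pd (fun y => f i y p.2 t) l p.1) * f i p.1 p.2 t / (η i * Mi i p.2))
        ((box d L) ×ˢ Set.univ))
    -- differentiation under the integral sign is justified
    (hder : ∀ t : ℝ, 0 ≤ t →
      HasDerivAt (fun s => Hsq d N Nl L η Mi f ρ s)
        (∑ i : Fin N,
          if (i : ℕ) < Nl then
            ∫ x in box d L, ∫ v,
              2 * f i x v t * deriv (fun s => f i x v s) t / (η i * Mi i v)
          else
            ∫ x in box d L, 2 * ρ i x t * deriv (fun s => ρ i x s) t / η i) t) :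
    ∀ t : ℝ, 0 ≤ t →
      HasDerivAt (fun s => (1 / 2) * Hsq d N Nl L η Mi f ρ s)
        (diss d N Nl L k η Mi f ρ t) t ∧
      diss d N Nl L k η Mi f ρ t ≤ 0 :=
  statement12_general d N Nl L hL k hk θ hθ Mi hMi η hηpos hηbal f ρ hfC1 hρC1 hfper hρdef hpde hode
    hfin1 hfin2 hfin3 hder

end
end

section
/- Let θ > 0 and let M_θ(v) := (2πθ)^{−d/2} exp(−|v|²/(2θ)) be the centered Gaussian density on ℝ^d. Then for every smooth compactly supported function ρ : ℝ^d → ℝ one has ∫_{ℝ^d} ∫_{ℝ^d} ( v·∇_x ( v·∇_x ρ(x) ) )² M_θ(v) dv dx ≤ d(d+2) θ² ∫_{ℝ^d} (Δρ(x))² dx, where v·∇_x(v·∇_x ρ) = Σ_{k,l=1}^d v_k v_l ∂_{x_k}∂_{x_l} ρ. -/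
open MeasureTheory Finset Real

noncomputable section

namespace Stmt14

variable {d : ℕ}

lemma hasDerivAt_update (f : (Fin d → ℝ) → ℝ) {x : Fin d → ℝ} (l : Fin d) (y : ℝ)
    (hf : DifferentiableAt ℝ f (Function.update x l y)) :
    HasDerivAt (fun s => f (Function.update x l s))
      (fderiv ℝ f (Function.update x l y) (Pi.single l 1)) y := by
  have hcurve : ∀ s : ℝ, Function.update x l s = x + (s - x l) • (Pi.single l 1 : Fin d → ℝ) := by
    intro s; funext i
    by_cases h : i = l
    · subst h; simp
    · simp [Function.update_of_ne h, Pi.single_apply, h]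
  have hc : HasDerivAt (fun s : ℝ => Function.update x l s) (Pi.single l 1) y := by
    have h1 : HasDerivAt (fun s : ℝ => s - x l) 1 y := (hasDerivAt_id y).sub_const _
    have h2 := (h1.smul_const (Pi.single l (1 : ℝ))).const_add x
    simp only [one_smul] at h2
    have hfun : (fun s : ℝ => Function.update x l s) = fun s => x + (s - x l) • Pi.single l 1 :=
      funext hcurve
    rw [hfun]; exact h2
  exact hf.hasFDerivAt.comp_hasDerivAt y hc

lemma pd_eq_fderiv {f : (Fin d → ℝ) → ℝ} {x : Fin d → ℝ} (hf : DifferentiableAt ℝ f x)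
    (l : Fin d) : pd f l x = fderiv ℝ f x (Pi.single l 1) := by
  have h := hasDerivAt_update f l (x l) (by rwa [Function.update_eq_self])
  rw [Function.update_eq_self] at h
  exact h.deriv

lemma pd_eq_fderiv' {f : (Fin d → ℝ) → ℝ} (hf : Differentiable ℝ f) (l : Fin d) :
    pd f l = fun x => fderiv ℝ f x (Pi.single l 1) :=
  funext fun x => pd_eq_fderiv (hf x) l

lemma contDiff_pd {f : (Fin d → ℝ) → ℝ} (hf : ContDiff ℝ (⊤ : ℕ∞) f) (l : Fin d) :
    ContDiff ℝ (⊤ : ℕ∞) (pd f l) := by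
  rw [pd_eq_fderiv' (hf.differentiable (by simp)) l]
  exact (hf.fderiv_right (by simp)).clm_apply contDiff_const

lemma hcs_pd {f : (Fin d → ℝ) → ℝ} (hs : HasCompactSupport f) (hf : Differentiable ℝ f)
    (l : Fin d) : HasCompactSupport (pd f l) := by
  rw [pd_eq_fderiv' hf l]
  exact hs.fderiv_apply ℝ (Pi.single l 1)

lemma pd_mul {f g : (Fin d → ℝ) → ℝ} (hf : Differentiable ℝ f) (hg : Differentiable ℝ g)
    (i : Fin d) (x : Fin d → ℝ) :
    pd (fun y => f y * g y) i x = pd f i x * g x + f x * pd g i x := by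
  have h1 : HasDerivAt (fun s => f (Function.update x i s)) (pd f i x) (x i) := by
    have h := hasDerivAt_update f i (x i) (by rw [Function.update_eq_self]; exact hf x)
    rw [Function.update_eq_self] at h
    rwa [pd_eq_fderiv (hf x) i]
  have h2 : HasDerivAt (fun s => g (Function.update x i s)) (pd g i x) (x i) := by
    have h := hasDerivAt_update g i (x i) (by rw [Function.update_eq_self]; exact hg x)
    rw [Function.update_eq_self] at h
    rwa [pd_eq_fderiv (hg x) i]
  have h3 := h1.mul h2
  rw [Function.update_eq_self] at h3
  exact h3.deriv

lemma pd_pd_symm {f : (Fin d → ℝ) → ℝ} (hf : ContDiff ℝ (⊤ : ℕ∞) f) (m l : Fin d) :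
    pd (pd f l) m = pd (pd f m) l := by
  have hdf : Differentiable ℝ f := hf.differentiable (by simp)
  have h1 : ContDiff ℝ (⊤ : ℕ∞) (fderiv ℝ f) := hf.fderiv_right (by simp)
  have hD : Differentiable ℝ (fderiv ℝ f) := h1.differentiable (by simp)
  funext x
  have hswap : ∀ l m : Fin d,
      pd (pd f l) m x = fderiv ℝ (fderiv ℝ f) x (Pi.single m 1) (Pi.single l 1) := by
    intro l m
    rw [pd_eq_fderiv (((contDiff_pd hf l).differentiable (by simp)) x) m, pd_eq_fderiv' hdf l]
    rw [fderiv_clm_apply (hD x) (differentiableAt_const _)]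
    simp
  rw [hswap l m, hswap m l]
  exact second_derivative_symmetric (fun y => (hdf y).hasFDerivAt) ((hD x).hasFDerivAt) _ _


lemma hcs_comp_insertNth {n : ℕ} {G : (Fin (n + 1) → ℝ) → ℝ} (hGs : HasCompactSupport G)
    (i : Fin (n + 1)) (y : Fin n → ℝ) :
    HasCompactSupport fun t : ℝ => G (i.insertNth t y) := by
  apply HasCompactSupport.intro (hGs.image (continuous_apply i))
  intro t ht
  by_contra h
  exact ht ⟨i.insertNth t y, subset_tsupport _ h, by simp⟩

lemma continuous_insertNth' {n : ℕ} (i : Fin (n + 1)) (y : Fin n → ℝ) :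
    Continuous (fun t : ℝ => i.insertNth t y : ℝ → (Fin (n + 1) → ℝ)) := by
  refine continuous_pi fun j => ?_
  rcases eq_or_ne j i with rfl | hj
  · simpa only [Fin.insertNth_apply_same] using continuous_id'
  · obtain ⟨k, rfl⟩ := Fin.exists_succAbove_eq hj
    simpa only [Fin.insertNth_apply_succAbove] using continuous_const

lemma update_insertNth {n : ℕ} (i : Fin (n + 1)) (t s : ℝ) (y : Fin n → ℝ) :
    Function.update (i.insertNth t y : Fin (n + 1) → ℝ) i s = i.insertNth s y := by
  funext j
  rcases eq_or_ne j i with rfl | hj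
  · simp
  · obtain ⟨k, rfl⟩ := Fin.exists_succAbove_eq hj
    rw [Function.update_of_ne (Fin.succAbove_ne i k)]
    simp

lemma integral_pd {d : ℕ} (hd : 1 ≤ d) {f : (Fin d → ℝ) → ℝ}
    (hf : ContDiff ℝ (⊤ : ℕ∞) f) (hs : HasCompactSupport f) (i : Fin d) :
    ∫ x, pd f i x = 0 := by
  obtain ⟨n, rfl⟩ : ∃ n, d = n + 1 := ⟨d - 1, (Nat.succ_pred_eq_of_pos hd).symm⟩
  have hdf : Differentiable ℝ f := hf.differentiable (by simp)
  have hGc : Continuous (pd f i) := (contDiff_pd hf i).continuous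
  have hGs : HasCompactSupport (pd f i) := hcs_pd hs hdf i
  have hgi : Integrable (pd f i) := hGc.integrable_of_hasCompactSupport hGs
  set e := MeasurableEquiv.piFinSuccAbove (fun _ : Fin (n + 1) => ℝ) i with he
  have hmp : MeasurePreserving e (volume : Measure (Fin (n + 1) → ℝ))
      (volume : Measure (ℝ × (Fin n → ℝ))) := by
    have h := measurePreserving_piFinSuccAbove (fun _ : Fin (n + 1) => (volume : Measure ℝ)) i
    rw [volume_pi, Measure.volume_eq_prod ℝ (Fin n → ℝ), volume_pi]
    exact h
  have hsymm : ∀ z : ℝ × (Fin n → ℝ), e.symm z = i.insertNth z.1 z.2 := fun z => rfl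
  have key : ∫ x, pd f i x = ∫ z : ℝ × (Fin n → ℝ), pd f i (e.symm z) :=
    ((hmp.symm e).integral_comp e.symm.measurableEmbedding _).symm
  have hint : Integrable (fun z : ℝ × (Fin n → ℝ) => pd f i (e.symm z)) :=
    ((hmp.symm e).integrable_comp_emb e.symm.measurableEmbedding).2 hgi
  rw [key]
  rw [show (volume : Measure (ℝ × (Fin n → ℝ))) = (volume : Measure ℝ).prod volume from
    Measure.volume_eq_prod ℝ (Fin n → ℝ)] at hint ⊢
  rw [integral_prod_symm _ hint]
  have inner_zero : ∀ y : Fin n → ℝ, ∫ t : ℝ, pd f i (e.symm (t, y)) = 0 := by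
    intro y
    simp_rw [hsymm]
    have hderiv : ∀ t : ℝ, HasDerivAt (fun s => f (i.insertNth s y))
        (pd f i (i.insertNth t y)) t := by
      intro t
      have h := hasDerivAt_update f (x := i.insertNth t y) i t
        (by rw [update_insertNth]; exact hdf _)
      rw [update_insertNth] at h
      have h2 : (fun s => f (Function.update (i.insertNth t y) i s))
          = fun s => f (i.insertNth s y) := by
        funext s; rw [update_insertNth]
      rw [h2] at h
      have h3 := h
      rw [← pd_eq_fderiv (hdf _) i] at h3
      simpa only [Fin.insertNth_apply_same] using h3
    have hint1 : Integrable (fun t : ℝ => pd f i (i.insertNth t y)) :=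
      (hGc.comp (continuous_insertNth' i y)).integrable_of_hasCompactSupport
        (hcs_comp_insertNth hGs i y)
    have hint2 : Integrable (fun t : ℝ => f (i.insertNth t y)) :=
      (hf.continuous.comp (continuous_insertNth' i y)).integrable_of_hasCompactSupport
        (hcs_comp_insertNth hs i y)
    exact integral_eq_zero_of_hasDerivAt_of_integrable hderiv hint1 hint2
  simp_rw [inner_zero]
  simp

lemma intg_cpt {d : ℕ} {f : (Fin d → ℝ) → ℝ} (hf : Continuous f)
    (hs : HasCompactSupport f) : Integrable f :=
  hf.integrable_of_hasCompactSupport hs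

lemma ibp {d : ℕ} (hd : 1 ≤ d) {f g : (Fin d → ℝ) → ℝ}
    (hf : ContDiff ℝ (⊤ : ℕ∞) f) (hfs : HasCompactSupport f)
    (hg : ContDiff ℝ (⊤ : ℕ∞) g) (hgs : HasCompactSupport g) (i : Fin d) :
    ∫ x, pd f i x * g x = - ∫ x, f x * pd g i x := by
  have h0 : ∫ x, pd (fun y => f y * g y) i x = 0 :=
    integral_pd hd (hf.mul hg) (hfs.mul_right) i
  have hre : ∀ x, pd (fun y => f y * g y) i x = pd f i x * g x + f x * pd g i x :=
    pd_mul (hf.differentiable (by simp)) (hg.differentiable (by simp)) i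
  simp_rw [hre] at h0
  have I1 : Integrable (fun x => pd f i x * g x) :=
    intg_cpt ((contDiff_pd hf i).continuous.mul hg.continuous)
      ((hcs_pd hfs (hf.differentiable (by simp)) i).mul_right)
  have I2 : Integrable (fun x => f x * pd g i x) :=
    intg_cpt (hf.continuous.mul (contDiff_pd hg i).continuous)
      (hfs.mul_right)
  rw [integral_add I1 I2] at h0
  linarith

lemma integral_sq_eq {d : ℕ} (hd : 1 ≤ d) {ρ : (Fin d → ℝ) → ℝ}
    (hρ : ContDiff ℝ (⊤ : ℕ∞) ρ) (hρs : HasCompactSupport ρ) (m l : Fin d) :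
    ∫ x, (pd (pd ρ l) m x) ^ 2 = ∫ x, pd (pd ρ m) m x * pd (pd ρ l) l x := by
  have hdρ := hρ.differentiable (by simp)
  have s1 : ∀ j : Fin d, ContDiff ℝ (⊤ : ℕ∞) (pd ρ j) := fun j => contDiff_pd hρ j
  have c1 : ∀ j : Fin d, HasCompactSupport (pd ρ j) := fun j => hcs_pd hρs hdρ j
  have s2 : ∀ j k : Fin d, ContDiff ℝ (⊤ : ℕ∞) (pd (pd ρ j) k) := fun j k => contDiff_pd (s1 j) k
  have c2 : ∀ j k : Fin d, HasCompactSupport (pd (pd ρ j) k) :=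
    fun j k => hcs_pd (c1 j) ((s1 j).differentiable (by simp)) k
  have h1 : ∫ x, pd (pd ρ l) m x * pd (pd ρ l) m x
      = - ∫ x, (pd ρ l) x * pd (pd (pd ρ l) m) m x :=
    ibp hd (s1 l) (c1 l) (s2 l m) (c2 l m) m
  have hsym1 : pd (pd ρ l) m = pd (pd ρ m) l := pd_pd_symm hρ m l
  have hsym2 : pd (pd (pd ρ l) m) m = pd (pd (pd ρ m) m) l := by
    rw [hsym1, pd_pd_symm (s1 m) m l]
  have h2 : ∫ x, pd (pd ρ l) l x * pd (pd ρ m) m x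
      = - ∫ x, (pd ρ l) x * pd (pd (pd ρ m) m) l x :=
    ibp hd (s1 l) (c1 l) (s2 m m) (c2 m m) l
  have : ∫ x, (pd (pd ρ l) m x) ^ 2 = ∫ x, pd (pd ρ l) m x * pd (pd ρ l) m x := by
    congr 1; funext x; ring
  rw [this, h1, hsym2, ← h2]
  congr 1; funext x; ring

lemma integrable_pow_exp {b : ℝ} (hb : 0 < b) (n : ℕ) :
    Integrable fun t : ℝ => t ^ n * Real.exp (-b * t ^ 2) := by
  have h := integrable_rpow_mul_exp_neg_mul_sq hb
    (s := (n : ℝ)) ((by norm_num : (-1:ℝ) < 0).trans_le (by positivity))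
  simpa [Real.rpow_natCast] using h

lemma integral_sq_exp {b : ℝ} (hb : 0 < b) :
    2 * b * ∫ t : ℝ, t ^ 2 * Real.exp (-b * t ^ 2) = Real.sqrt (π / b) := by
  have hF : ∀ t : ℝ, HasDerivAt (fun u : ℝ => u * Real.exp (-b * u ^ 2))
      (Real.exp (-b * t ^ 2) - 2 * b * (t ^ 2 * Real.exp (-b * t ^ 2))) t := by
    intro t
    have h1 : HasDerivAt (fun u : ℝ => -b * u ^ 2) (-b * (2 * t ^ 1)) t :=
      (hasDerivAt_pow 2 t).const_mul (-b)
    have h2 := h1.exp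
    have h3 := (hasDerivAt_id t).mul h2
    exact h3.congr_deriv (by simp only [id_eq]; ring)
  have hI2 := integrable_pow_exp hb 2
  have hI2' : Integrable (fun t : ℝ => 2 * b * (t ^ 2 * Real.exp (-b * t ^ 2))) :=
    hI2.const_mul _
  have h0 : ∫ t : ℝ, (Real.exp (-b * t ^ 2) - 2 * b * (t ^ 2 * Real.exp (-b * t ^ 2))) = 0 :=
    integral_eq_zero_of_hasDerivAt_of_integrable hF
      ((integrable_exp_neg_mul_sq hb).sub hI2')
      (by simpa using integrable_pow_exp hb 1)
  rw [integral_sub (integrable_exp_neg_mul_sq hb) hI2', integral_const_mul,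
    integral_gaussian] at h0
  linarith

lemma integral_pow4_exp {b : ℝ} (hb : 0 < b) :
    2 * b * ∫ t : ℝ, t ^ 4 * Real.exp (-b * t ^ 2)
      = 3 * ∫ t : ℝ, t ^ 2 * Real.exp (-b * t ^ 2) := by
  have hF : ∀ t : ℝ, HasDerivAt (fun u : ℝ => u ^ 3 * Real.exp (-b * u ^ 2))
      (3 * (t ^ 2 * Real.exp (-b * t ^ 2)) - 2 * b * (t ^ 4 * Real.exp (-b * t ^ 2))) t := by
    intro t
    have h1 : HasDerivAt (fun u : ℝ => -b * u ^ 2) (-b * (2 * t ^ 1)) t :=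
      (hasDerivAt_pow 2 t).const_mul (-b)
    have h2 := h1.exp
    have h3 := (hasDerivAt_pow 3 t).mul h2
    exact h3.congr_deriv (by ring)
  have hI2 := integrable_pow_exp hb 2
  have hI4 := integrable_pow_exp hb 4
  have h0 : ∫ t : ℝ, (3 * (t ^ 2 * Real.exp (-b * t ^ 2))
      - 2 * b * (t ^ 4 * Real.exp (-b * t ^ 2))) = 0 :=
    integral_eq_zero_of_hasDerivAt_of_integrable hF
      ((hI2.const_mul 3).sub (hI4.const_mul (2 * b)))
      (integrable_pow_exp hb 3)
  rw [integral_sub (hI2.const_mul 3) (hI4.const_mul (2 * b)), integral_const_mul,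
    integral_const_mul] at h0
  linarith

def gauss1 (θ : ℝ) (t : ℝ) : ℝ :=
  (2 * π * θ) ^ (-(1 : ℝ) / 2) * Real.exp (-t ^ 2 / (2 * θ))

lemma gauss1_eq (θ t : ℝ) :
    gauss1 θ t = (2 * π * θ) ^ (-(1 : ℝ) / 2) * Real.exp (-(2 * θ)⁻¹ * t ^ 2) := by
  unfold gauss1
  congr 1
  ring_nf

lemma integrable_pow_gauss1 {θ : ℝ} (hθ : 0 < θ) (n : ℕ) :
    Integrable fun t : ℝ => t ^ n * gauss1 θ t := by
  have hb : 0 < (2 * θ)⁻¹ := by positivity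
  have h := (integrable_pow_exp hb n).const_mul ((2 * π * θ) ^ (-(1 : ℝ) / 2))
  apply h.congr
  filter_upwards with t
  rw [gauss1_eq]
  ring

lemma sqrt_pi_div (hθ : 0 < θ) :
    Real.sqrt (π / (2 * θ)⁻¹) = (2 * π * θ) ^ ((1 : ℝ) / 2) := by
  have h1 : π / (2 * θ)⁻¹ = 2 * π * θ := by
    field_simp
  rw [h1, Real.sqrt_eq_rpow]

lemma rpow_half_mul (hθ : 0 < θ) :
    (2 * π * θ) ^ (-(1 : ℝ) / 2) * (2 * π * θ) ^ ((1 : ℝ) / 2) = 1 := by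
  have hpos : (0 : ℝ) < 2 * π * θ := by positivity
  rw [← Real.rpow_add hpos]
  norm_num

lemma integral_gauss1 {θ : ℝ} (hθ : 0 < θ) : ∫ t : ℝ, gauss1 θ t = 1 := by
  have hb : 0 < (2 * θ)⁻¹ := by positivity
  simp_rw [gauss1_eq]
  rw [integral_const_mul, integral_gaussian, sqrt_pi_div hθ, rpow_half_mul hθ]

lemma integral_sq_gauss1 {θ : ℝ} (hθ : 0 < θ) : ∫ t : ℝ, t ^ 2 * gauss1 θ t = θ := by
  have hb : 0 < (2 * θ)⁻¹ := by positivity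
  have h2b : 2 * (2 * θ)⁻¹ = θ⁻¹ := by
    rw [mul_inv]
    field_simp
  have hI := integral_sq_exp hb
  rw [h2b, sqrt_pi_div hθ] at hI
  have hI2 : ∫ t : ℝ, t ^ 2 * Real.exp (-(2 * θ)⁻¹ * t ^ 2) = θ * (2 * π * θ) ^ ((1 : ℝ) / 2) := by
    have := congrArg (fun z => θ * z) hI
    simpa [← mul_assoc, mul_inv_cancel₀ (ne_of_gt hθ)] using this
  calc ∫ t : ℝ, t ^ 2 * gauss1 θ t
      = (2 * π * θ) ^ (-(1 : ℝ) / 2) * ∫ t : ℝ, t ^ 2 * Real.exp (-(2 * θ)⁻¹ * t ^ 2) := by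
        rw [← integral_const_mul]
        congr 1; funext t; rw [gauss1_eq]; ring
    _ = θ := by
        rw [hI2, ← mul_assoc, mul_comm ((2 * π * θ) ^ (-(1 : ℝ) / 2)) θ, mul_assoc,
          rpow_half_mul hθ, mul_one]

lemma integral_pow4_gauss1 {θ : ℝ} (hθ : 0 < θ) :
    ∫ t : ℝ, t ^ 4 * gauss1 θ t = 3 * θ ^ 2 := by
  have hb : 0 < (2 * θ)⁻¹ := by positivity
  have h2b : 2 * (2 * θ)⁻¹ = θ⁻¹ := by
    rw [mul_inv]
    field_simp
  have hI := integral_pow4_exp hb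
  rw [h2b] at hI
  have hIsq : ∫ t : ℝ, t ^ 2 * Real.exp (-(2 * θ)⁻¹ * t ^ 2)
      = θ * (2 * π * θ) ^ ((1 : ℝ) / 2) := by
    have hJ := integral_sq_exp hb
    rw [h2b, sqrt_pi_div hθ] at hJ
    have := congrArg (fun z => θ * z) hJ
    simpa [← mul_assoc, mul_inv_cancel₀ (ne_of_gt hθ)] using this
  have hI4 : ∫ t : ℝ, t ^ 4 * Real.exp (-(2 * θ)⁻¹ * t ^ 2)
      = 3 * θ ^ 2 * (2 * π * θ) ^ ((1 : ℝ) / 2) := by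
    have h := congrArg (fun z => θ * z) hI
    simp only [← mul_assoc, mul_inv_cancel₀ (ne_of_gt hθ), one_mul] at h
    rw [h, hIsq]
    ring
  calc ∫ t : ℝ, t ^ 4 * gauss1 θ t
      = (2 * π * θ) ^ (-(1 : ℝ) / 2) * ∫ t : ℝ, t ^ 4 * Real.exp (-(2 * θ)⁻¹ * t ^ 2) := by
        rw [← integral_const_mul]
        congr 1; funext t; rw [gauss1_eq]; ring
    _ = 3 * θ ^ 2 := by
        rw [hI4]
        have : (2 * π * θ) ^ (-(1 : ℝ) / 2) * (3 * θ ^ 2 * (2 * π * θ) ^ ((1 : ℝ) / 2))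
            = 3 * θ ^ 2 * ((2 * π * θ) ^ (-(1 : ℝ) / 2) * (2 * π * θ) ^ ((1 : ℝ) / 2)) := by ring
        rw [this, rpow_half_mul hθ, mul_one]

lemma gauss1_nonneg {θ : ℝ} (hθ : 0 < θ) (t : ℝ) : 0 ≤ gauss1 θ t :=
  mul_nonneg (Real.rpow_nonneg (by positivity) _) (Real.exp_pos _).le

lemma Mtheta_eq {d : ℕ} {θ : ℝ} (hθ : 0 < θ) (v : Fin d → ℝ) :
    (2 * π * θ) ^ (-(d : ℝ) / 2) * Real.exp (-(∑ l, (v l) ^ 2) / (2 * θ))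
      = ∏ i, gauss1 θ (v i) := by
  have hpos : (0 : ℝ) < 2 * π * θ := by positivity
  unfold gauss1
  rw [Finset.prod_mul_distrib, Finset.prod_const, Finset.card_univ, Fintype.card_fin,
    ← Real.exp_sum]
  congr 1
  · rw [← Real.rpow_natCast ((2 * π * θ) ^ (-(1 : ℝ) / 2)) d, ← Real.rpow_mul hpos.le]
    congr 1
    ring
  · congr 1
    rw [← Finset.sum_div, ← Finset.sum_neg_distrib]

lemma prod_pow_ite {d : ℕ} (a : Fin d) (v : Fin d → ℝ) :
    (∏ i, (v i) ^ (if i = a then 2 else 0)) = (v a) ^ 2 := by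
  have h : ∀ i ∈ Finset.univ, (v i) ^ (if i = a then 2 else 0)
      = (if i = a then (v i) ^ 2 else 1) := by
    intro i _
    split_ifs <;> simp
  rw [Finset.prod_congr rfl h, Finset.prod_ite_eq']
  simp

lemma moment_pair {d : ℕ} {θ : ℝ} (hθ : 0 < θ) (m l : Fin d) :
    Integrable (fun v : Fin d → ℝ => (v m) ^ 2 * (v l) ^ 2 * ∏ i, gauss1 θ (v i)) ∧
    ∫ v : Fin d → ℝ, (v m) ^ 2 * (v l) ^ 2 * ∏ i, gauss1 θ (v i)
      = (if m = l then 3 * θ ^ 2 else θ ^ 2) := by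
  set k : Fin d → ℕ := fun i => (if i = m then 2 else 0) + (if i = l then 2 else 0) with hk
  have hrw : ∀ v : Fin d → ℝ, (v m) ^ 2 * (v l) ^ 2 * ∏ i, gauss1 θ (v i)
      = ∏ i, ((v i) ^ (k i) * gauss1 θ (v i)) := by
    intro v
    rw [Finset.prod_mul_distrib]
    congr 1
    simp_rw [hk, pow_add]
    rw [Finset.prod_mul_distrib, prod_pow_ite, prod_pow_ite]
  constructor
  · simp_rw [hrw]
    exact Integrable.fintype_prod fun i => integrable_pow_gauss1 hθ (k i)
  · simp_rw [hrw]
    rw [integral_fintype_prod_volume_eq_prod (fun i t => t ^ (k i) * gauss1 θ t)]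
    have vi : ∀ i, (∫ t : ℝ, t ^ (k i) * gauss1 θ t)
        = (if i = m then (if m = l then 3 * θ ^ 2 else θ) else if i = l then θ else 1) := by
      intro i
      by_cases him : i = m <;> by_cases hil : i = l
      · subst him
        rw [if_pos rfl, if_pos hil]
        simp only [hk, if_pos rfl, if_pos hil]
        exact integral_pow4_gauss1 hθ
      · subst him
        rw [if_pos rfl, if_neg hil]
        simp only [hk, if_pos rfl, if_neg hil]
        exact integral_sq_gauss1 hθ
      · subst hil
        rw [if_neg him, if_pos rfl]
        simp only [hk, if_neg him, if_pos rfl]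
        exact integral_sq_gauss1 hθ
      · rw [if_neg him, if_neg hil]
        simp only [hk, if_neg him, if_neg hil]
        simpa using integral_gauss1 hθ
    rw [Finset.prod_congr rfl fun i _ => vi i]
    by_cases hml : m = l
    · subst hml
      simp only [eq_self_iff_true, if_true]
      have h : ∀ i ∈ Finset.univ, ((if i = m then 3 * θ ^ 2 else if i = m then θ else 1) : ℝ)
          = (if i = m then 3 * θ ^ 2 else 1) := by
        intro i _
        split_ifs <;> simp_all
      rw [Finset.prod_congr rfl h, Finset.prod_ite_eq']
      simp
    · simp only [if_neg hml]
      have h : ∀ i ∈ Finset.univ,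
          ((if i = m then θ else if i = l then θ else 1) : ℝ)
          = (if i = m then θ else 1) * (if i = l then θ else 1) := by
        intro i _
        rcases eq_or_ne i m with rfl | him
        · rw [if_pos rfl, if_pos rfl, if_neg hml, mul_one]
        · rw [if_neg him, if_neg him, one_mul]
      rw [Finset.prod_congr rfl h, Finset.prod_mul_distrib, Finset.prod_ite_eq',
        Finset.prod_ite_eq']
      simp [sq]

lemma W_props {d : ℕ} {θ : ℝ} (hθ : 0 < θ) :
    Integrable (fun v : Fin d → ℝ => (∑ l, (v l) ^ 2) ^ 2 * ∏ i, gauss1 θ (v i)) ∧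
    ∫ v : Fin d → ℝ, (∑ l, (v l) ^ 2) ^ 2 * ∏ i, gauss1 θ (v i)
      = (d : ℝ) * ((d : ℝ) + 2) * θ ^ 2 := by
  have hWrw : ∀ v : Fin d → ℝ, (∑ l, (v l) ^ 2) ^ 2 * ∏ i, gauss1 θ (v i)
      = ∑ p : Fin d × Fin d, (v p.1) ^ 2 * (v p.2) ^ 2 * ∏ i, gauss1 θ (v i) := by
    intro v
    rw [← Finset.sum_mul, ← Finset.univ_product_univ, Finset.sum_product, sq (∑ l, (v l) ^ 2),
      Finset.sum_mul_sum]
  constructor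
  · simp_rw [hWrw]
    exact integrable_finset_sum _ fun p _ => (moment_pair hθ p.1 p.2).1
  · simp_rw [hWrw]
    rw [integral_finset_sum _ fun p _ => (moment_pair hθ p.1 p.2).1,
      Finset.sum_congr rfl fun p _ => (moment_pair hθ p.1 p.2).2,
      ← Finset.univ_product_univ, Finset.sum_product]
    have hinner : ∀ m : Fin d, (∑ l, if m = l then 3 * θ ^ 2 else θ ^ 2)
        = 2 * θ ^ 2 + (d : ℝ) * θ ^ 2 := by
      intro m
      have h : ∀ l ∈ Finset.univ, (if m = l then 3 * θ ^ 2 else θ ^ 2)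
          = (if m = l then 2 * θ ^ 2 else 0) + θ ^ 2 := by
        intro l _
        split_ifs <;> ring
      rw [Finset.sum_congr rfl h, Finset.sum_add_distrib, Finset.sum_ite_eq, if_pos (Finset.mem_univ m),
        Finset.sum_const, Finset.card_univ, Fintype.card_fin, nsmul_eq_mul]
    rw [Finset.sum_congr rfl fun m _ => hinner m, Finset.sum_const, Finset.card_univ,
      Fintype.card_fin, nsmul_eq_mul]
    ring

lemma sq_int {d : ℕ} {f : (Fin d → ℝ) → ℝ} (hf : ContDiff ℝ (⊤ : ℕ∞) f)
    (hc : HasCompactSupport f) : Integrable (fun x => (f x) ^ 2) := by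
  simp_rw [sq]
  exact intg_cpt (hf.continuous.mul hf.continuous) hc.mul_right

end Stmt14

open Stmt14

set_option maxHeartbeats 2000000

/-- Fourth-moment estimate for the Gaussian: for smooth compactly supported `ρ`,
`∫∫ (v·∇_x(v·∇_x ρ))² M_θ(v) dv dx ≤ d(d+2) θ² ∫ (Δρ)² dx`. -/
theorem statement14
    (d : ℕ) (hd : 1 ≤ d) (θ : ℝ) (hθ : 0 < θ)
    (ρ : (Fin d → ℝ) → ℝ)
    (hρ : ContDiff ℝ (⊤ : ℕ∞) ρ) (hρsupp : HasCompactSupport ρ) :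
    let Mθ : (Fin d → ℝ) → ℝ :=
      fun v => (2 * π * θ) ^ (-(d : ℝ) / 2) * Real.exp (-(∑ l, (v l) ^ 2) / (2 * θ));
    (∫ x, ∫ v, (∑ m, ∑ l, v m * v l * pd (fun y => pd ρ l y) m x) ^ 2 * Mθ v)
      ≤ d * (d + 2) * θ ^ 2 * ∫ x, (∑ l, pd (fun y => pd ρ l y) l x) ^ 2 := by
  intro Mθ
  have hM : ∀ v : Fin d → ℝ, Mθ v = ∏ i, gauss1 θ (v i) := fun v => Stmt14.Mtheta_eq hθ v
  have hMnn : ∀ v : Fin d → ℝ, 0 ≤ Mθ v := fun v => by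
    rw [hM v]; exact Finset.prod_nonneg fun i _ => Stmt14.gauss1_nonneg hθ _
  have hdρ : Differentiable ℝ ρ := hρ.differentiable (by simp)
  have s1 : ∀ j : Fin d, ContDiff ℝ (⊤ : ℕ∞) (pd ρ j) := fun j => Stmt14.contDiff_pd hρ j
  have c1 : ∀ j : Fin d, HasCompactSupport (pd ρ j) := fun j => Stmt14.hcs_pd hρsupp hdρ j
  have s2 : ∀ j k : Fin d, ContDiff ℝ (⊤ : ℕ∞) (pd (pd ρ j) k) := fun j k => Stmt14.contDiff_pd (s1 j) k
  have c2 : ∀ j k : Fin d, HasCompactSupport (pd (pd ρ j) k) :=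
    fun j k => Stmt14.hcs_pd (c1 j) ((s1 j).differentiable (by simp)) k
  set S : (Fin d → ℝ) → ℝ := fun x => ∑ p : Fin d × Fin d, (pd (pd ρ p.2) p.1 x) ^ 2 with hSdef
  have hSnn : ∀ x, 0 ≤ S x := fun x => Finset.sum_nonneg fun p _ => sq_nonneg _
  have hSint : Integrable S :=
    integrable_finset_sum _ fun p _ => Stmt14.sq_int (s2 p.2 p.1) (c2 p.2 p.1)
  obtain ⟨hWint, hWval⟩ := Stmt14.W_props (d := d) hθ
  have hWint' : Integrable (fun v : Fin d → ℝ => (∑ l, (v l) ^ 2) ^ 2 * Mθ v) := by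
    apply hWint.congr
    filter_upwards with v
    rw [hM v]
  have hWval' : ∫ v : Fin d → ℝ, (∑ l, (v l) ^ 2) ^ 2 * Mθ v
      = (d : ℝ) * ((d : ℝ) + 2) * θ ^ 2 := by
    rw [← hWval]
    congr 1
    funext v
    rw [hM v]
  have claimA : ∀ x, (∫ v, (∑ m, ∑ l, v m * v l * pd (pd ρ l) m x) ^ 2 * Mθ v)
      ≤ S x * ((d : ℝ) * ((d : ℝ) + 2) * θ ^ 2) := by
    intro x
    have hpt : ∀ v : Fin d → ℝ, (∑ m, ∑ l, v m * v l * pd (pd ρ l) m x) ^ 2 * Mθ v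
        ≤ S x * ((∑ l, (v l) ^ 2) ^ 2 * Mθ v) := by
      intro v
      have hQ : (∑ p : Fin d × Fin d, (v p.1 * v p.2) * pd (pd ρ p.2) p.1 x)
          = ∑ m, ∑ l, v m * v l * pd (pd ρ l) m x := by
        rw [← Finset.univ_product_univ, Finset.sum_product]
      have hv2 : (∑ l, (v l) ^ 2) ^ 2 = ∑ p : Fin d × Fin d, (v p.1 * v p.2) ^ 2 := by
        rw [sq, Finset.sum_mul_sum, ← Finset.univ_product_univ, Finset.sum_product]
        simp_rw [mul_pow]
      have hcs := Finset.sum_mul_sq_le_sq_mul_sq Finset.univ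
        (fun p : Fin d × Fin d => v p.1 * v p.2) (fun p => pd (pd ρ p.2) p.1 x)
      rw [hQ] at hcs
      have hb : (∑ m, ∑ l, v m * v l * pd (pd ρ l) m x) ^ 2
          ≤ (∑ l, (v l) ^ 2) ^ 2 * S x := by
        rw [hv2]
        exact hcs
      calc (∑ m, ∑ l, v m * v l * pd (pd ρ l) m x) ^ 2 * Mθ v
          ≤ ((∑ l, (v l) ^ 2) ^ 2 * S x) * Mθ v :=
            mul_le_mul_of_nonneg_right hb (hMnn v)
        _ = S x * ((∑ l, (v l) ^ 2) ^ 2 * Mθ v) := by ring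
    calc (∫ v, (∑ m, ∑ l, v m * v l * pd (pd ρ l) m x) ^ 2 * Mθ v)
        ≤ ∫ v, S x * ((∑ l, (v l) ^ 2) ^ 2 * Mθ v) :=
          integral_mono_of_nonneg (ae_of_all _ fun v => mul_nonneg (sq_nonneg _) (hMnn v))
            (hWint'.const_mul (S x)) (ae_of_all _ hpt)
      _ = S x * ((d : ℝ) * ((d : ℝ) + 2) * θ ^ 2) := by rw [integral_const_mul, hWval']
  have houter : (∫ x, ∫ v, (∑ m, ∑ l, v m * v l * pd (pd ρ l) m x) ^ 2 * Mθ v)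
      ≤ ∫ x, S x * ((d : ℝ) * ((d : ℝ) + 2) * θ ^ 2) :=
    integral_mono_of_nonneg
      (ae_of_all _ fun x => integral_nonneg fun v => mul_nonneg (sq_nonneg _) (hMnn v))
      (hSint.mul_const _) (ae_of_all _ claimA)
  have hSval : ∫ x, S x = ∫ x, (∑ l, pd (pd ρ l) l x) ^ 2 := by
    have h1 : ∫ x, S x = ∑ p : Fin d × Fin d, ∫ x, (pd (pd ρ p.2) p.1 x) ^ 2 :=
      integral_finset_sum _ fun p _ => Stmt14.sq_int (s2 p.2 p.1) (c2 p.2 p.1)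
    have h2 : ∀ p : Fin d × Fin d, ∫ x, (pd (pd ρ p.2) p.1 x) ^ 2
        = ∫ x, pd (pd ρ p.1) p.1 x * pd (pd ρ p.2) p.2 x :=
      fun p => Stmt14.integral_sq_eq hd hρ hρsupp p.1 p.2
    have h3 : (∑ p : Fin d × Fin d, ∫ x, pd (pd ρ p.1) p.1 x * pd (pd ρ p.2) p.2 x)
        = ∫ x, ∑ p : Fin d × Fin d, pd (pd ρ p.1) p.1 x * pd (pd ρ p.2) p.2 x :=
      (integral_finset_sum _ fun p _ => Stmt14.intg_cpt
        ((s2 p.1 p.1).continuous.mul (s2 p.2 p.2).continuous) ((c2 p.1 p.1).mul_right)).symm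
    have h4 : ∀ x, (∑ p : Fin d × Fin d, pd (pd ρ p.1) p.1 x * pd (pd ρ p.2) p.2 x)
        = (∑ l, pd (pd ρ l) l x) ^ 2 := by
      intro x
      rw [sq, Finset.sum_mul_sum, ← Finset.univ_product_univ, Finset.sum_product]
    rw [h1, Finset.sum_congr rfl fun p _ => h2 p, h3]
    congr 1
    funext x
    rw [h4]
  calc (∫ x, ∫ v, (∑ m, ∑ l, v m * v l * pd (pd ρ l) m x) ^ 2 * Mθ v)
      ≤ ∫ x, S x * ((d : ℝ) * ((d : ℝ) + 2) * θ ^ 2) := houter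
    _ = (∫ x, S x) * ((d : ℝ) * ((d : ℝ) + 2) * θ ^ 2) := integral_mul_const _ _
    _ = (∫ x, (∑ l, pd (pd ρ l) l x) ^ 2) * ((d : ℝ) * ((d : ℝ) + 2) * θ ^ 2) := by
        rw [hSval]
    _ = d * (d + 2) * θ ^ 2 * ∫ x, (∑ l, pd (fun y => pd ρ l y) l x) ^ 2 := by ring

end
end
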